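/- arXiv:2202.05067 — 4 statements merged into one kernel-verified Lean document; each statement's English description precedes it below -/
import Mathlib

section
/- Let n ≥ 2 and 1 ≤ k ≤ n. For every λ ∈ Γ and every i = 1, …, n, the partial derivative h_i(λ) = ∂h/∂λ_i is strictly positive. -/
open Finset

/-- The `k`-th elementary symmetric polynomial of `x : Fin n → ℝ`. -/
noncomputable def esym (n k : ℕ) (x : Fin n → ℝ) : ℝ :=
  ∑ s ∈ Finset.univ.powersetCard k, ∏ i ∈ s, x i

/-- The Gårding cone `Γ_k = {x : σ_j(x) > 0 for j = 1, …, k}`. -/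
def GammaK (n k : ℕ) : Set (Fin n → ℝ) :=
  {x | ∀ j : ℕ, 1 ≤ j → j ≤ k → 0 < esym n j x}

/-- The linear map `μ_i(λ) = ∑_{j ≠ i} λ_j`. -/
def mu (n : ℕ) (x : Fin n → ℝ) : Fin n → ℝ :=
  fun i => (∑ j, x j) - x i

/-- The cone `Γ = {λ : μ(λ) ∈ Γ_k}`. -/
def GammaCone (n k : ℕ) : Set (Fin n → ℝ) :=
  {x | mu n x ∈ GammaK n k}

/-- The function `h(λ) = σ_k(μ(λ))^{1/k}`. -/
noncomputable def hfun (n k : ℕ) (x : Fin n → ℝ) : ℝ :=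
  (esym n k (mu n x)) ^ ((1 : ℝ) / k)

/-- `h_i(λ) = ∂h/∂λ_i`. -/
noncomputable def hderiv (n k : ℕ) (i : Fin n) (x : Fin n → ℝ) : ℝ :=
  fderiv ℝ (hfun n k) x (Pi.single i 1)

/-- The function `μ ↦ σ_k(μ)^{1/k}`. -/
noncomputable def sigmaPow (n k : ℕ) (y : Fin n → ℝ) : ℝ :=
  (esym n k y) ^ ((1 : ℝ) / k)

/-- `h̃_i(λ) = (∂σ_k^{1/k}/∂μ_i)(μ(λ))`. -/
noncomputable def htilde (n k : ℕ) (i : Fin n) (x : Fin n → ℝ) : ℝ :=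
  fderiv ℝ (sigmaPow n k) (mu n x) (Pi.single i 1)

/-- `σ_{m; i}(x)`: the `m`-th elementary symmetric polynomial of `x` with the
`i`-th entry deleted. -/
noncomputable def esymDel (n m : ℕ) (i : Fin n) (x : Fin n → ℝ) : ℝ :=
  ∑ s ∈ (Finset.univ.erase i).powersetCard m, ∏ j ∈ s, x j

open Polynomial

lemma roots_lin (a : ℝ) : (X + C a).roots = {-a} := by
  rw [show (X + C a : ℝ[X]) = X - C (-a) by simp]
  exact roots_X_sub_C _

lemma esym_zero (n : ℕ) (y : Fin n → ℝ) : esym n 0 y = 1 := by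
  simp [esym, Finset.powersetCard_zero]

-- coefficients of the full product polynomial
lemma P_coeff (n : ℕ) (y : Fin n → ℝ) (m : ℕ) (hm : m ≤ n) :
    (∏ j : Fin n, (X + C (y j))).coeff m = esym n (n - m) y := by
  rw [Finset.prod_X_add_C_coeff Finset.univ y (by simpa using hm)]
  simp [esym]

lemma P_monic (n : ℕ) (y : Fin n → ℝ) : (∏ j : Fin n, (X + C (y j))).Monic :=
  monic_prod_of_monic _ _ (fun j _ => monic_X_add_C (y j))

lemma P_natDegree (n : ℕ) (y : Fin n → ℝ) : (∏ j : Fin n, (X + C (y j))).natDegree = n := by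
  rw [natDegree_prod_of_monic _ _ (fun j _ => monic_X_add_C (y j))]
  simp

lemma entries_pos (n : ℕ) (hn : 1 ≤ n) (y : Fin n → ℝ)
    (hy : y ∈ GammaK n n) (j : Fin n) : 0 < y j := by
  by_contra hc
  push_neg at hc
  set P := ∏ l : Fin n, (X + C (y l)) with hP
  have hz : P.eval (-(y j)) = 0 := by
    rw [hP, Polynomial.eval_prod]
    exact Finset.prod_eq_zero (Finset.mem_univ j) (by simp)
  have hpos : 0 < P.eval (-(y j)) := by
    rw [Polynomial.eval_eq_sum_range]
    apply Finset.sum_pos'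
    · intro m hm
      rw [Finset.mem_range, P_natDegree] at hm
      have hcoeff : 0 < P.coeff m := by
        rw [hP, P_coeff n y m (by omega)]
        rcases Nat.eq_or_lt_of_le (Nat.le_of_lt_succ hm) with h | h
        · rw [h]; simp [esym_zero]
        · exact hy (n - m) (by omega) (by omega)
      exact mul_nonneg hcoeff.le (pow_nonneg (by linarith) m)
    · refine ⟨0, ?_, ?_⟩
      · rw [Finset.mem_range]; omega
      · have hcoeff : 0 < P.coeff 0 := by
          rw [hP, P_coeff n y 0 (by omega)]
          exact hy n (by omega) (by omega)
        simpa using hcoeff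
  rw [hz] at hpos
  exact lt_irrefl 0 hpos



lemma iter_facts (p : ℝ[X]) (hp : p.Monic) (hroots : Multiset.card p.roots = p.natDegree)
    (r : ℕ) (hr : r ≤ p.natDegree) :
    (derivative^[r] p).natDegree = p.natDegree - r ∧
    Multiset.card (derivative^[r] p).roots = p.natDegree - r ∧
    (derivative^[r] p).leadingCoeff = (p.natDegree.descFactorial r : ℝ) := by
  set d := p.natDegree with hd
  have hcoefftop : (derivative^[r] p).coeff (d - r) = (d.descFactorial r : ℝ) := by
    rw [Polynomial.coeff_iterate_derivative, Nat.sub_add_cancel hr, hp.coeff_natDegree]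
    simp
  have hdesc : d.descFactorial r ≠ 0 := by
    rw [Ne, Nat.descFactorial_eq_zero_iff_lt]; omega
  have hne : (derivative^[r] p).coeff (d - r) ≠ 0 := by
    rw [hcoefftop]; exact_mod_cast hdesc
  have hdegle : (derivative^[r] p).natDegree ≤ d - r := p.natDegree_iterate_derivative r
  have hdeg : (derivative^[r] p).natDegree = d - r :=
    le_antisymm hdegle (Polynomial.le_natDegree_of_ne_zero hne)
  have hcard_ge : d - r ≤ Multiset.card (derivative^[r] p).roots := by
    clear hcoefftop hne hdegle hdeg hdesc
    induction r with
    | zero => simp [hroots]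
    | succ m ih =>
        have h1 := (derivative^[m] p).card_roots_le_derivative
        rw [← Function.iterate_succ_apply' derivative] at h1
        simp only [Nat.succ_eq_add_one] at h1
        have := ih (by omega)
        omega
  have hcard : Multiset.card (derivative^[r] p).roots = d - r :=
    le_antisymm (hdeg ▸ (derivative^[r] p).card_roots') hcard_ge
  refine ⟨hdeg, hcard, ?_⟩
  rw [Polynomial.leadingCoeff, hdeg, hcoefftop]

lemma eval_prod_pos (l : Multiset ℝ) (x : ℝ) (h : ∀ a ∈ l, a < x) :
    0 < ((l.map fun a => X - C a).prod).eval x := by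
  rw [Polynomial.eval_multiset_prod]
  apply Multiset.prod_pos
  intro b hb
  rw [Multiset.mem_map] at hb
  obtain ⟨q, hq, rfl⟩ := hb
  rw [Multiset.mem_map] at hq
  obtain ⟨a, ha, rfl⟩ := hq
  simp only [eval_sub, eval_X, eval_C, sub_pos]
  exact h a ha

lemma eval_deriv_prod_nonneg (l : Multiset ℝ) (x : ℝ) (h : ∀ a ∈ l, a < x) :
    0 ≤ (derivative (l.map fun a => X - C a).prod).eval x := by
  induction l using Multiset.induction_on with
  | empty => simp
  | cons a t ih =>
      rw [Multiset.map_cons, Multiset.prod_cons, derivative_mul, eval_add, eval_mul, eval_mul]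
      have h1 : ∀ b ∈ t, b < x := fun b hb => h b (Multiset.mem_cons_of_mem hb)
      have h2 := eval_prod_pos t x h1
      have h3 : (0:ℝ) < x - a := sub_pos.2 (h a (Multiset.mem_cons_self a t))
      have h4 := ih h1
      simp only [derivative_sub, derivative_X, derivative_C, sub_zero, eval_one, eval_sub,
        eval_X, eval_C]
      nlinarith

lemma eval_deriv_prod_pos (l : Multiset ℝ) (x : ℝ) (hl : l ≠ 0) (h : ∀ a ∈ l, a < x) :
    0 < (derivative (l.map fun a => X - C a).prod).eval x := by
  obtain ⟨a, ha⟩ := Multiset.exists_mem_of_ne_zero hl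
  obtain ⟨t, rfl⟩ := Multiset.exists_cons_of_mem ha
  rw [Multiset.map_cons, Multiset.prod_cons, derivative_mul, eval_add, eval_mul, eval_mul]
  have h1 : ∀ b ∈ t, b < x := fun b hb => h b (Multiset.mem_cons_of_mem hb)
  have h2 := eval_prod_pos t x h1
  have h3 : (0:ℝ) < x - a := sub_pos.2 (h a (Multiset.mem_cons_self a t))
  have h4 := eval_deriv_prod_nonneg t x h1
  simp only [derivative_sub, derivative_X, derivative_C, sub_zero, eval_one, eval_sub,
    eval_X, eval_C]
  nlinarith

lemma iter_deriv_linear_mul (a : ℝ) (p : ℝ[X]) (r : ℕ) :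
    derivative^[r+1] ((X + C a) * p) =
      (X + C a) * derivative^[r+1] p + C ((r:ℝ)+1) * derivative^[r] p := by
  induction r with
  | zero =>
      simp [derivative_mul]
      ring
  | succ m ih =>
      rw [Function.iterate_succ_apply' derivative (m+1), ih, derivative_add, derivative_mul,
        derivative_mul, ← Function.iterate_succ_apply' derivative (m+1),
        ← Function.iterate_succ_apply' derivative m]
      simp only [derivative_add, derivative_X, derivative_C, add_zero, one_mul,
        Nat.cast_add, Nat.cast_one]
      simp only [Nat.succ_eq_add_one, Nat.one_add]
      ring_nf
      simp only [C_add, map_ofNat, C_1]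
      ring

lemma core_neg_roots (p : ℝ[X]) (a : ℝ) (r : ℕ) (hr1 : 1 ≤ r) (hrd : r < p.natDegree)
    (hp : p.Monic) (hroots : Multiset.card p.roots = p.natDegree)
    (hQ : ∀ t : ℝ, 0 ≤ t → 0 < (derivative^[r] ((X + C a) * p)).eval t) :
    ∀ ρ ∈ (derivative^[r] p).roots, ρ < 0 := by
  set d := p.natDegree with hd
  by_contra hcon
  push_neg at hcon
  obtain ⟨ρ₀, hρ₀m, hρ₀⟩ := hcon
  set R : ℝ[X] := derivative^[r-1] p with hR
  set R' : ℝ[X] := derivative^[r] p with hR'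
  have hRR' : R' = derivative R := by
    rw [hR, hR', ← Function.iterate_succ_apply' derivative]
    congr 1
    omega
  obtain ⟨hRdeg, hRcard, hRlead⟩ := iter_facts p hp hroots (r-1) (by omega)
  obtain ⟨hR'deg, hR'card, hR'lead⟩ := iter_facts p hp hroots r (by omega)
  rw [← hR] at hRdeg hRcard hRlead
  rw [← hR'] at hR'deg hR'card hR'lead
  have hRne : R ≠ 0 := by
    intro h; rw [h] at hRlead
    have : (d.descFactorial (r-1) : ℝ) ≠ 0 := by
      have : d.descFactorial (r-1) ≠ 0 := by
        rw [Ne, Nat.descFactorial_eq_zero_iff_lt]; omega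
      exact_mod_cast this
    simp [Polynomial.leadingCoeff_zero] at hRlead
    exact this hRlead.symm
  have hR'ne : R' ≠ 0 := by
    intro h; rw [h] at hR'lead
    have : (d.descFactorial r : ℝ) ≠ 0 := by
      have : d.descFactorial r ≠ 0 := by
        rw [Ne, Nat.descFactorial_eq_zero_iff_lt]; omega
      exact_mod_cast this
    simp [Polynomial.leadingCoeff_zero] at hR'lead
    exact this hR'lead.symm
  -- t* : max root of R'
  have hR'rne : R'.roots ≠ 0 := by
    intro h; rw [h] at hR'card; simp at hR'card; omega
  obtain ⟨tstar, htm, htmax⟩ : ∃ t ∈ R'.roots, ∀ ρ ∈ R'.roots, ρ ≤ t := by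
    have hne : R'.roots.toFinset.Nonempty := by
      rwa [Multiset.toFinset_nonempty]
    refine ⟨R'.roots.toFinset.max' hne, ?_, ?_⟩
    · have := R'.roots.toFinset.max'_mem hne
      rwa [Multiset.mem_toFinset] at this
    · intro ρ hρ
      exact R'.roots.toFinset.le_max' ρ (Multiset.mem_toFinset.2 hρ)
  have htstar0 : 0 ≤ tstar := le_trans hρ₀ (htmax ρ₀ hρ₀m)
  have htroot : R'.eval tstar = 0 := (Polynomial.mem_roots'.1 htm).2
  -- Q at tstar
  have hQid : derivative^[r] ((X + C a) * p) = (X + C a) * R' + C ((r-1:ℕ)+1:ℝ) * R := by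
    have h2 := iter_deriv_linear_mul a p (r-1)
    have hrr : r - 1 + 1 = r := by omega
    rw [hrr] at h2
    exact h2
  have hQt := hQ tstar htstar0
  rw [hQid] at hQt
  simp only [Polynomial.eval_add, Polynomial.eval_mul, htroot, mul_zero, zero_add,
    Polynomial.eval_C] at hQt
  have hRt : 0 < R.eval tstar := by
    have hc : (0:ℝ) < ((r-1:ℕ):ℝ) + 1 := by positivity
    nlinarith
  -- R' positive beyond tstar
  have hR'split : R' = C R'.leadingCoeff * (R'.roots.map fun ρ => X - C ρ).prod :=
    (Polynomial.C_leadingCoeff_mul_prod_multiset_X_sub_C (by rw [hR'card, hR'deg])).symm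
  have hR'lead_pos : 0 < R'.leadingCoeff := by
    rw [hR'lead]
    have : d.descFactorial r ≠ 0 := by rw [Ne, Nat.descFactorial_eq_zero_iff_lt]; omega
    positivity
  have hR'pos : ∀ t, tstar < t → 0 < R'.eval t := by
    intro t ht
    rw [hR'split]
    rw [Polynomial.eval_mul, Polynomial.eval_C]
    refine mul_pos hR'lead_pos (eval_prod_pos _ _ ?_)
    intro ρ hρ
    exact lt_of_le_of_lt (htmax ρ hρ) ht
  -- R strictly monotone on [tstar, ∞)
  have hmono : StrictMonoOn (fun t => R.eval t) (Set.Ici tstar) := by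
    refine strictMonoOn_of_deriv_pos (convex_Ici tstar)
      (R.continuous_aeval.continuousOn) ?_
    intro t ht
    rw [interior_Ici] at ht
    rw [Polynomial.deriv, ← hRR']
    exact hR'pos t ht
  -- all roots of R are < tstar
  have hRroots : ∀ ρ ∈ R.roots, ρ < tstar := by
    intro ρ hρ
    by_contra hge
    push_neg at hge
    have hz : R.eval ρ = 0 := (Polynomial.mem_roots'.1 hρ).2
    rcases eq_or_lt_of_le hge with h | h
    · rw [← h] at hz; linarith
    · have := hmono (Set.self_mem_Ici) (Set.mem_Ici.2 hge) h
      simp only at this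
      rw [hz] at this
      linarith
  -- contradiction: R'(tstar) > 0
  have hRsplit : R = C R.leadingCoeff * (R.roots.map fun ρ => X - C ρ).prod :=
    (Polynomial.C_leadingCoeff_mul_prod_multiset_X_sub_C (by rw [hRcard, hRdeg])).symm
  have hRlead_pos : 0 < R.leadingCoeff := by
    rw [hRlead]
    have : d.descFactorial (r-1) ≠ 0 := by rw [Ne, Nat.descFactorial_eq_zero_iff_lt]; omega
    positivity
  have hRrne : R.roots ≠ 0 := by
    intro h; rw [h] at hRcard; simp at hRcard; omega
  have : 0 < R'.eval tstar := by
    rw [hRR', hRsplit, derivative_C_mul, Polynomial.eval_mul, Polynomial.eval_C]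
    exact mul_pos hRlead_pos (eval_deriv_prod_pos _ _ hRrne hRroots)
  linarith

lemma esymDel_pos (n k : ℕ) (hn : 2 ≤ n) (hk1 : 1 ≤ k) (hkn : k ≤ n)
    (y : Fin n → ℝ) (hy : y ∈ GammaK n k) (i : Fin n) :
    0 < esymDel n (k - 1) i y := by
  -- trivial case k = 1
  rcases Nat.eq_or_lt_of_le hk1 with h1 | hk2
  · rw [← h1]
    simp [esymDel, Finset.powersetCard_zero]
  -- case k = n : all entries positive
  rcases Nat.eq_or_lt_of_le hkn with hkn' | hklt
  · have hpos : ∀ j, 0 < y j := by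
      intro j
      exact entries_pos n (by omega) y (hkn' ▸ hy) j
    apply Finset.sum_pos
    · intro t ht
      exact Finset.prod_pos (fun l _ => hpos l)
    · apply Finset.powersetCard_nonempty_of_le
      rw [Finset.card_erase_of_mem (Finset.mem_univ i)]
      simp only [Finset.card_univ, Fintype.card_fin]
      omega
  -- main case 2 ≤ k < n
  set B := Finset.univ.erase i with hB
  have hBcard : B.card = n - 1 := by
    rw [hB, Finset.card_erase_of_mem (Finset.mem_univ i)]
    simp
  set Pi : ℝ[X] := ∏ j ∈ B, (X + C (y j)) with hPi
  have hPimonic : Pi.Monic := monic_prod_of_monic _ _ (fun j _ => monic_X_add_C (y j))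
  have hPideg : Pi.natDegree = n - 1 := by
    rw [hPi, natDegree_prod_of_monic _ _ (fun j _ => monic_X_add_C (y j))]
    simp [hBcard]
  have hPine : Pi ≠ 0 := hPimonic.ne_zero
  have hPiroots : Multiset.card Pi.roots = n - 1 := by
    rw [hPi, Polynomial.roots_prod _ _ (by rw [← hPi]; exact hPine), Multiset.card_bind]
    have heq : (Multiset.map (Multiset.card ∘ fun l => (X + C (y l)).roots) B.val).sum
        = (Multiset.map (fun _ : Fin n => 1) B.val).sum := by
      congr 1
      apply Multiset.map_congr rfl
      intro j _
      simp [roots_lin]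
    rw [heq, Multiset.map_const', Multiset.sum_replicate, smul_eq_mul, mul_one]
    exact hBcard
  -- relation to the full product
  have hPfact : (∏ j : Fin n, (X + C (y j))) = (X + C (y i)) * Pi := by
    rw [hPi, hB]
    exact (Finset.mul_prod_erase Finset.univ _ (Finset.mem_univ i)).symm
  -- positivity of Q = D^[n-k] P on [0, ∞)
  have hQpos : ∀ t : ℝ, 0 ≤ t →
      0 < (derivative^[n-k] ((X + C (y i)) * Pi)).eval t := by
    intro t ht
    rw [← hPfact]
    set Q := derivative^[n-k] (∏ j : Fin n, (X + C (y j))) with hQ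
    have hQdeg : Q.natDegree ≤ k := by
      calc Q.natDegree ≤ (∏ j : Fin n, (X + C (y j))).natDegree - (n-k) :=
            Polynomial.natDegree_iterate_derivative _ _
        _ = k := by rw [P_natDegree]; omega
    have hQcoeff : ∀ m, m ≤ k → 0 < Q.coeff m := by
      intro m hm
      rw [hQ, Polynomial.coeff_iterate_derivative, P_coeff n y (m + (n-k)) (by omega)]
      have hdesc : 0 < (m + (n-k)).descFactorial (n-k) := by
        exact Nat.pos_of_ne_zero (by rw [Ne, Nat.descFactorial_eq_zero_iff_lt]; omega)
      have hesym : 0 < esym n (n - (m + (n-k))) y := by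
        rcases Nat.eq_or_lt_of_le hm with h | h
        · have : n - (m + (n-k)) = 0 := by omega
          rw [this, esym_zero]; norm_num
        · exact hy (n - (m + (n-k))) (by omega) (by omega)
      have := smul_pos hdesc hesym
      simpa using this
    rw [Polynomial.eval_eq_sum_range]
    apply Finset.sum_pos'
    · intro m hm
      rw [Finset.mem_range] at hm
      exact mul_nonneg (hQcoeff m (by omega)).le (pow_nonneg ht m)
    · exact ⟨0, by rw [Finset.mem_range]; omega, by simpa using hQcoeff 0 (by omega)⟩
  -- apply the core lemma
  have hneg := core_neg_roots Pi (y i) (n-k) (by omega) (by rw [hPideg]; omega)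
    hPimonic (by rw [hPideg]; exact hPiroots) hQpos
  -- extract positivity of the constant coefficient
  set R' := derivative^[n-k] Pi with hR'
  obtain ⟨hR'deg, hR'card, hR'lead⟩ := iter_facts Pi hPimonic
    (by rw [hPideg]; exact hPiroots) (n-k) (by rw [hPideg]; omega)
  have hR'split : R' = C R'.leadingCoeff * (R'.roots.map fun ρ => X - C ρ).prod :=
    (Polynomial.C_leadingCoeff_mul_prod_multiset_X_sub_C (by rw [hR'card, hR'deg])).symm
  have hR'lead_pos : 0 < R'.leadingCoeff := by
    rw [hR'lead, hPideg]
    have : (n-1).descFactorial (n-k) ≠ 0 := by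
      rw [Ne, Nat.descFactorial_eq_zero_iff_lt]; omega
    positivity
  have heval : 0 < R'.eval 0 := by
    rw [hR'split, Polynomial.eval_mul, Polynomial.eval_C]
    exact mul_pos hR'lead_pos (eval_prod_pos _ _ hneg)
  have hcoeff0 : R'.coeff 0 = ((n-k).descFactorial (n-k) : ℝ) * esymDel n (k-1) i y := by
    rw [hR', Polynomial.coeff_iterate_derivative]
    have : Pi.coeff (0 + (n-k)) = esymDel n (k-1) i y := by
      rw [hPi, zero_add, Finset.prod_X_add_C_coeff B y (by omega)]
      rw [esymDel, ← hB]
      congr 1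
      congr 1
      omega
    rw [this]
    simp [nsmul_eq_mul]
  rw [← Polynomial.coeff_zero_eq_eval_zero, hcoeff0] at heval
  have hdesc : (0:ℝ) < ((n-k).descFactorial (n-k) : ℝ) := by
    have : (n-k).descFactorial (n-k) ≠ 0 := by
      rw [Ne, Nat.descFactorial_eq_zero_iff_lt]; omega
    positivity
  nlinarith

/-- The derivative of `esym n k` as a continuous linear map. -/
noncomputable def esymD (n k : ℕ) (y : Fin n → ℝ) : (Fin n → ℝ) →L[ℝ] ℝ :=
  ∑ s ∈ Finset.univ.powersetCard k, ∑ j ∈ s,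
    (∏ l ∈ s.erase j, y l) • ContinuousLinearMap.proj j

lemma hasFDerivAt_esym (n k : ℕ) (y : Fin n → ℝ) :
    HasFDerivAt (esym n k) (esymD n k y) y := by
  apply HasFDerivAt.fun_sum
  intro s _
  exact HasFDerivAt.finset_prod (fun j _ => hasFDerivAt_apply j y)

/-- The linear map `mu` as a continuous linear map. -/
noncomputable def muL (n : ℕ) : (Fin n → ℝ) →L[ℝ] (Fin n → ℝ) :=
  ContinuousLinearMap.pi fun i =>
    (∑ j : Fin n, ContinuousLinearMap.proj j) - ContinuousLinearMap.proj i

lemma muL_eq (n : ℕ) : ⇑(muL n) = mu n := by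
  funext x
  ext i
  simp [muL, mu, ContinuousLinearMap.sum_apply]

lemma hasFDerivAt_hfun (n k : ℕ) (lam : Fin n → ℝ) (h : 0 < esym n k (mu n lam)) :
    HasFDerivAt (hfun n k)
      (((((1:ℝ)/k) * (esym n k (mu n lam)) ^ ((1:ℝ)/k - 1)) •
        esymD n k (mu n lam)).comp (muL n)) lam := by
  have h1 : HasFDerivAt (sigmaPow n k)
      ((((1:ℝ)/k) * (esym n k (mu n lam)) ^ ((1:ℝ)/k - 1)) • esymD n k (mu n lam))
      (mu n lam) :=
    HasFDerivAt.rpow_const (hasFDerivAt_esym n k (mu n lam)) (Or.inl h.ne')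
  have h2 := (muL n).hasFDerivAt (x := lam)
  have h3 := h1.comp lam (by rwa [muL_eq] at h2)
  have : hfun n k = (sigmaPow n k) ∘ (mu n) := rfl
  rw [this]
  exact h3

lemma esymD_single (n k : ℕ) (hk : 1 ≤ k) (y : Fin n → ℝ) (j : Fin n) :
    esymD n k y (Pi.single j 1) = esymDel n (k-1) j y := by
  rw [esymD]
  rw [ContinuousLinearMap.sum_apply]
  have hinner : ∀ s ∈ Finset.univ.powersetCard k,
      (∑ l ∈ s, (∏ m ∈ s.erase l, y m) •
          (ContinuousLinearMap.proj l : (Fin n → ℝ) →L[ℝ] ℝ)) (Pi.single j 1)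
        = if j ∈ s then ∏ m ∈ s.erase j, y m else 0 := by
    intro s _
    rw [ContinuousLinearMap.sum_apply]
    have : ∀ l ∈ s, ((∏ m ∈ s.erase l, y m) •
          (ContinuousLinearMap.proj l : (Fin n → ℝ) →L[ℝ] ℝ))
        (Pi.single j 1) = if l = j then ∏ m ∈ s.erase l, y m else 0 := by
      intro l _
      simp [ContinuousLinearMap.proj_apply, Pi.single_apply, mul_ite]
    rw [Finset.sum_congr rfl this]
    simp [Finset.sum_ite_eq' s j]
  rw [Finset.sum_congr rfl hinner, ← Finset.sum_filter]
  rw [esymDel]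
  apply Finset.sum_nbij' (fun s => s.erase j) (fun t => insert j t)
  · intro s hs
    rw [Finset.mem_filter, Finset.mem_powersetCard_univ] at hs
    rw [Finset.mem_powersetCard]
    constructor
    · intro x hx
      rw [Finset.mem_erase] at hx ⊢
      exact ⟨hx.1, Finset.mem_univ x⟩
    · rw [Finset.card_erase_of_mem hs.2, hs.1]
  · intro t ht
    rw [Finset.mem_powersetCard] at ht
    have hjt : j ∉ t := fun hj => (Finset.mem_erase.1 (ht.1 hj)).1 rfl
    rw [Finset.mem_filter, Finset.mem_powersetCard_univ]
    constructor
    · rw [Finset.card_insert_of_notMem hjt, ht.2]; omega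
    · exact Finset.mem_insert_self j t
  · intro s hs
    rw [Finset.mem_filter] at hs
    exact Finset.insert_erase hs.2
  · intro t ht
    rw [Finset.mem_powersetCard] at ht
    exact Finset.erase_insert (fun hj => (Finset.mem_erase.1 (ht.1 hj)).1 rfl)
  · intro s _
    rfl

lemma muL_single (n : ℕ) (i : Fin n) :
    muL n (Pi.single i 1) = ∑ j ∈ Finset.univ.erase i, Pi.single j 1 := by
  rw [muL_eq]
  funext l
  rw [mu]
  by_cases hl : l = i
  · subst hl
    simp [Finset.sum_apply, Pi.single_apply, Finset.sum_ite_eq, Finset.sum_ite_eq']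
  · simp [Finset.sum_apply, Pi.single_apply, Finset.sum_ite_eq, Finset.sum_ite_eq', hl]


/-- for every `λ ∈ Γ` and every `i`, the partial derivative
`h_i(λ) = ∂h/∂λ_i` is strictly positive. -/
theorem stmt4 (n k : ℕ) (hn : 2 ≤ n) (hk1 : 1 ≤ k) (hkn : k ≤ n)
    (lam : Fin n → ℝ) (hlam : lam ∈ GammaCone n k) (i : Fin n) :
    0 < hderiv n k i lam := by
  have hmem : mu n lam ∈ GammaK n k := hlam
  have hE : 0 < esym n k (mu n lam) := hmem k hk1 le_rfl
  have hF := hasFDerivAt_hfun n k lam hE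
  rw [hderiv, hF.fderiv]
  rw [ContinuousLinearMap.comp_apply, muL_single n i, map_sum]
  have hterm : ∀ j ∈ Finset.univ.erase i,
      ((((1:ℝ)/k) * (esym n k (mu n lam)) ^ ((1:ℝ)/k - 1)) • esymD n k (mu n lam))
        (Pi.single j 1)
      = (((1:ℝ)/k) * (esym n k (mu n lam)) ^ ((1:ℝ)/k - 1)) *
          esymDel n (k-1) j (mu n lam) := by
    intro j _
    rw [ContinuousLinearMap.smul_apply, esymD_single n k hk1, smul_eq_mul]
  rw [Finset.sum_congr rfl hterm]
  apply Finset.sum_pos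
  · intro j _
    apply mul_pos
    · apply mul_pos
      · have : (0:ℝ) < k := by exact_mod_cast hk1
        positivity
      · positivity
    · exact esymDel_pos n k hn hk1 hkn (mu n lam) hmem j
  · obtain ⟨j, hj⟩ := Fintype.exists_ne_of_one_lt_card (by simp; omega) i
    exact ⟨j, Finset.mem_erase.2 ⟨hj, Finset.mem_univ j⟩⟩
end

section
/- Let n ≥ 1 and 2 ≤ k ≤ n. For every μ ∈ Γ_k and indices j ≠ l, if μ_j > μ_l then σ_{k−1;j}(μ) ≤ σ_{k−1;l}(μ). -/
open Finset

section Stmt10AuxSection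
open Polynomial

namespace Stmt10Aux

open Multiset



lemma esymm_zero' (s : Multiset ℝ) : s.esymm 0 = 1 := by
  simp [Multiset.esymm]

lemma esymm_eq_zero_of_lt {s : Multiset ℝ} {m : ℕ} (h : Multiset.card s < m) :
    s.esymm m = 0 := by
  rw [Multiset.esymm, Multiset.powersetCard_eq_empty _ h]
  simp

lemma esymm_cons (a : ℝ) (s : Multiset ℝ) (m : ℕ) :
    (a ::ₘ s).esymm (m + 1) = s.esymm (m + 1) + a * s.esymm m := by
  rw [Multiset.esymm, Multiset.powersetCard_cons, Multiset.map_add, Multiset.sum_add]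
  congr 1
  rw [Multiset.esymm, Multiset.map_map, ← Multiset.sum_map_mul_left]
  apply congr_arg
  apply Multiset.map_congr rfl
  intro u _
  simp [Multiset.prod_cons]

lemma esymm_self (s : Multiset ℝ) : s.esymm (Multiset.card s) = s.prod := by
  induction s using Multiset.induction with
  | empty => simp [Multiset.esymm]
  | cons a s ih =>
    rw [Multiset.card_cons, esymm_cons, esymm_eq_zero_of_lt (Nat.lt_succ_self _),
      Multiset.prod_cons, ih]
    ring

lemma esymm_one' (s : Multiset ℝ) : s.esymm 1 = s.sum := by
  rw [Multiset.esymm, Multiset.powersetCard_one, Multiset.map_map]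
  simp

lemma esymm_inv (s : Multiset ℝ) (h0 : (0 : ℝ) ∉ s) :
    ∀ j, j ≤ Multiset.card s →
      s.esymm (Multiset.card s - j) = s.prod * (s.map Inv.inv).esymm j := by
  induction s using Multiset.induction with
  | empty =>
    intro j hj
    simp only [Multiset.card_zero, Nat.le_zero] at hj
    subst hj
    simp [esymm_zero']
  | cons a u ih =>
    have ha : a ≠ 0 := fun h => h0 (h ▸ Multiset.mem_cons_self a u)
    have h0u : (0 : ℝ) ∉ u := fun h => h0 (Multiset.mem_cons_of_mem h)
    have hup : u.prod ≠ 0 := Multiset.prod_ne_zero h0u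
    intro j hj
    rw [Multiset.card_cons] at hj
    rcases Nat.eq_zero_or_pos j with rfl | hjpos
    · rw [Nat.sub_zero, esymm_self, esymm_zero', mul_one]
    obtain ⟨j', rfl⟩ : ∃ j', j = j' + 1 := ⟨j - 1, by omega⟩
    rw [Multiset.map_cons, Multiset.prod_cons]
    by_cases hje : j' = Multiset.card u
    · subst hje
      have hc : Multiset.card (a ::ₘ u) - (Multiset.card u + 1) = 0 := by
        rw [Multiset.card_cons]; omega
      rw [hc, esymm_zero']
      have hcc : Multiset.card u + 1 = Multiset.card (a⁻¹ ::ₘ u.map Inv.inv) := by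
        rw [Multiset.card_cons, Multiset.card_map]
      rw [hcc, esymm_self, Multiset.prod_cons, Multiset.prod_map_inv']
      field_simp
    · have hj'u : j' + 1 ≤ Multiset.card u := by omega
      have hc1 : Multiset.card (a ::ₘ u) - (j' + 1) = (Multiset.card u - (j' + 1)) + 1 := by
        rw [Multiset.card_cons]; omega
      rw [hc1, esymm_cons, esymm_cons]
      have hc2 : Multiset.card u - (j' + 1) + 1 = Multiset.card u - j' := by omega
      rw [hc2]
      rw [ih h0u j' (by omega), ih h0u (j' + 1) hj'u]
      field_simp
      ring
    
lemma sum_sq_identity (s : Multiset ℝ) :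
    s.sum ^ 2 = (s.map (· ^ 2)).sum + 2 * s.esymm 2 := by
  induction s using Multiset.induction with
  | empty => simp [esymm_eq_zero_of_lt (show Multiset.card (0 : Multiset ℝ) < 2 by simp)]
  | cons a u ih =>
    rw [Multiset.sum_cons, Multiset.map_cons, Multiset.sum_cons, esymm_cons, esymm_one']
    linear_combination ih

lemma map_sq_nonneg (s : Multiset ℝ) : (0:ℝ) ≤ (s.map (· ^ 2)).sum := by
  apply Multiset.sum_nonneg
  intro x hx
  obtain ⟨y, _, rfl⟩ := Multiset.mem_map.mp hx
  positivity

lemma ms_cs (s : Multiset ℝ) :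
    s.sum ^ 2 ≤ (Multiset.card s : ℝ) * (s.map (· ^ 2)).sum := by
  induction s using Multiset.induction with
  | empty => simp
  | cons a u ih =>
    rw [Multiset.sum_cons, Multiset.map_cons, Multiset.sum_cons, Multiset.card_cons]
    have h1 : (0:ℝ) ≤ (Multiset.card u : ℝ) := by positivity
    have h2 := map_sq_nonneg u
    push_cast
    rcases Multiset.empty_or_exists_mem u with rfl | _
    · simp
    · have h3 : (1:ℝ) ≤ (Multiset.card u : ℝ) := by
        have : 1 ≤ Multiset.card u := by
          rename_i hx
          obtain ⟨x, hx⟩ := hx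
          exact Multiset.card_pos.mpr (fun h => by simp [h] at hx)
        exact_mod_cast this
      nlinarith [sq_nonneg ((Multiset.card u : ℝ) * a - u.sum), sq_nonneg a, sq_nonneg u.sum,
        mul_le_mul_of_nonneg_left ih h1]

lemma newton_one (s : Multiset ℝ) :
    s.esymm 0 * s.esymm 2 * ((Multiset.card s).choose 1 : ℝ) ^ 2 ≤
      s.esymm 1 ^ 2 * (((Multiset.card s).choose 0 : ℝ) * ((Multiset.card s).choose 2 : ℝ)) := by
  rcases Nat.eq_zero_or_pos (Multiset.card s) with h0 | h1
  · have hs : s = 0 := Multiset.card_eq_zero.mp h0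
    subst hs
    simp [esymm_eq_zero_of_lt]
  · have hC2 : ((Multiset.card s).choose 2 : ℝ) * 2 =
        (Multiset.card s : ℝ) ^ 2 - (Multiset.card s : ℝ) := by
      have h := Nat.choose_succ_right_eq (Multiset.card s) 1
      rw [Nat.choose_one_right] at h
      have h' := congrArg (Nat.cast : ℕ → ℝ) h
      push_cast [Nat.cast_sub h1] at h'
      linarith [h']
    rw [esymm_zero', esymm_one', Nat.choose_one_right, Nat.choose_zero_right]
    have hNQ : (Multiset.card s : ℝ) * s.sum ^ 2 ≤
        (Multiset.card s : ℝ) ^ 2 * (s.map (· ^ 2)).sum := by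
      have := mul_le_mul_of_nonneg_left (ms_cs s) (show (0:ℝ) ≤ (Multiset.card s : ℝ) by positivity)
      nlinarith [this]
    have hid := sum_sq_identity s
    push_cast
    nlinarith [hNQ, hid, hC2]




lemma exists_deriv_multiset (s : Multiset ℝ) (N : ℕ) (hN : Multiset.card s = N)
    (h1 : 1 ≤ N) :
    ∃ t : Multiset ℝ, Multiset.card t = N - 1 ∧
      ∀ j, j ≤ N - 1 → (N : ℝ) * t.esymm j = ((N - j : ℕ) : ℝ) * s.esymm j := by
  set P : ℝ[X] := ((s.map Neg.neg).map fun a => X - C a).prod with hP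
  have hPalt : P = (s.map fun r => X + C r).prod := by
    rw [hP, Multiset.map_map]
    apply congr_arg
    apply Multiset.map_congr rfl
    intro r _
    simp [sub_eq_add_neg]
  have hProots : P.roots = s.map Neg.neg := roots_multiset_prod_X_sub_C _
  have hPmonic : P.Monic := monic_multiset_prod_of_monic _ _ (fun a _ => monic_X_sub_C a)
  have hPdeg : P.natDegree = N := by
    rw [hP, natDegree_multiset_prod_X_sub_C_eq_card, Multiset.card_map, hN]
  set D := derivative P with hD
  have hDdeg_le : D.natDegree ≤ N - 1 := by
    have := natDegree_derivative_le P
    rw [hPdeg] at this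
    exact this
  have hDcard : Multiset.card D.roots = N - 1 := by
    have h2 := P.card_roots_le_derivative
    have h3 := D.card_roots'
    rw [hProots, Multiset.card_map, hN, ← hD] at h2
    omega
  have hDdegEq : D.natDegree = N - 1 :=
    le_antisymm hDdeg_le (hDcard ▸ D.card_roots')
  have hlc : D.leadingCoeff = (N : ℝ) := by
    rw [Polynomial.leadingCoeff, hDdegEq, hD, coeff_derivative]
    have e1 : N - 1 + 1 = N := Nat.sub_add_cancel h1
    rw [e1]
    have e2 : P.coeff N = 1 := by
      rw [← hPdeg]
      exact hPmonic.coeff_natDegree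
    rw [e2, one_mul, Nat.cast_sub h1]
    push_cast
    ring
  have hDfact := C_leadingCoeff_mul_prod_multiset_X_sub_C (p := D) (hDcard.trans hDdegEq.symm)
  refine ⟨D.roots.map Neg.neg, by rw [Multiset.card_map, hDcard], ?_⟩
  intro j hj
  set t : Multiset ℝ := D.roots.map Neg.neg with hts
  have hcardt : Multiset.card t = N - 1 := by rw [hts, Multiset.card_map, hDcard]
  have hQ : (t.map fun r => X + C r).prod = (D.roots.map fun a => X - C a).prod := by
    rw [hts, Multiset.map_map]
    apply congr_arg
    apply Multiset.map_congr rfl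
    intro r _
    simp [sub_eq_add_neg]
  have hDt : C (N : ℝ) * (t.map fun r => X + C r).prod = D := by
    rw [hQ, ← hlc]
    exact hDfact
  -- coefficient at N - 1 - j
  have hc1 : (N : ℝ) * t.esymm j = D.coeff (N - 1 - j) := by
    have hle : N - 1 - j ≤ Multiset.card t := by omega
    have := Multiset.prod_X_add_C_coeff t hle
    have hidx : Multiset.card t - (N - 1 - j) = j := by omega
    rw [hidx] at this
    rw [← this, ← hDt, coeff_C_mul]
  have hc2 : D.coeff (N - 1 - j) = ((N - j : ℕ) : ℝ) * s.esymm j := by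
    rw [hD, coeff_derivative]
    have e3 : N - 1 - j + 1 = N - j := by omega
    rw [e3]
    have hle2 : N - j ≤ Multiset.card s := by omega
    have := Multiset.prod_X_add_C_coeff s hle2
    have hidx2 : Multiset.card s - (N - j) = j := by omega
    rw [hidx2] at this
    rw [← hPalt] at this
    rw [this]
    have : ((N - 1 - j : ℕ) : ℝ) + 1 = ((N - j : ℕ) : ℝ) := by
      rw [← e3]
      push_cast
      ring
    rw [this]
    ring
  rw [hc1, hc2]



lemma nat_id (N j : ℕ) (h1 : 1 ≤ N) :
    N * (N - 1).choose j = (N - j) * N.choose j := by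
  have h2 := Nat.add_one_mul_choose_eq (N - 1) j
  have e1 : N - 1 + 1 = N := by omega
  rw [e1] at h2
  have h3 := Nat.choose_succ_right_eq N j
  rw [h2, h3, Nat.mul_comm]

lemma choose_lc (N k : ℕ) (h : k + 2 ≤ N) :
    N.choose k * N.choose (k + 2) < N.choose (k + 1) ^ 2 := by
  have e1 : N.choose (k + 1) * (k + 1) = N.choose k * (N - k) := Nat.choose_succ_right_eq N k
  have e2 : N.choose (k + 2) * (k + 2) = N.choose (k + 1) * (N - (k + 1)) :=
    Nat.choose_succ_right_eq N (k + 1)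
  have hpos : 0 < N.choose (k + 1) := Nat.choose_pos (by omega)
  have key : (N.choose k * N.choose (k + 2)) * ((k + 2) * (N - k)) =
      N.choose (k + 1) ^ 2 * ((k + 1) * (N - (k + 1))) := by
    calc (N.choose k * N.choose (k + 2)) * ((k + 2) * (N - k))
        = (N.choose k * (N - k)) * (N.choose (k + 2) * (k + 2)) := by ring
      _ = (N.choose (k + 1) * (k + 1)) * (N.choose (k + 1) * (N - (k + 1))) := by rw [← e1, e2]
      _ = N.choose (k + 1) ^ 2 * ((k + 1) * (N - (k + 1))) := by ring
  have hlt : (k + 1) * (N - (k + 1)) < (k + 2) * (N - k) := by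
    calc (k + 1) * (N - (k + 1)) < (k + 2) * (N - (k + 1)) := by
          apply Nat.mul_lt_mul_of_lt_of_le (by omega) (le_refl _)
          omega
      _ ≤ (k + 2) * (N - k) := Nat.mul_le_mul_left _ (by omega)
  have : (N.choose k * N.choose (k + 2)) * ((k + 2) * (N - k)) <
      N.choose (k + 1) ^ 2 * ((k + 2) * (N - k)) := by
    rw [key]
    exact Nat.mul_lt_mul_of_pos_left hlt (pow_pos hpos 2)
  exact Nat.lt_of_mul_lt_mul_right this

lemma newton : ∀ (N : ℕ) (s : Multiset ℝ) (m : ℕ), Multiset.card s = N → 1 ≤ m → m + 1 ≤ N →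
    s.esymm (m - 1) * s.esymm (m + 1) * (N.choose m : ℝ) ^ 2 ≤
      s.esymm m ^ 2 * ((N.choose (m - 1) : ℝ) * (N.choose (m + 1) : ℝ)) := by
  intro N
  induction N using Nat.strong_induction_on with
  | _ N IH =>
  intro s m hcard hm1 hmN
  rcases eq_or_lt_of_le hm1 with hm | hm2
  · -- m = 1
    subst hcard
    rw [← hm]
    exact newton_one s
  · -- 2 ≤ m
    rcases eq_or_lt_of_le hmN with hEq | hlt
    · -- m + 1 = N
      subst hEq
      by_cases h0 : (0 : ℝ) ∈ s
      · have hz : s.esymm (m + 1) = 0 := by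
          rw [← hcard, esymm_self]
          exact Multiset.prod_eq_zero h0
        rw [hz]
        have h1 : (0:ℝ) ≤ s.esymm m ^ 2 * ((((m+1)).choose (m - 1) : ℝ) * (((m+1)).choose (m + 1) : ℝ)) := by
          positivity
        nlinarith [h1]
      · -- inversion
        set t : Multiset ℝ := s.map Inv.inv with ht
        have hct : Multiset.card t = m + 1 := by rw [ht, Multiset.card_map, hcard]
        have hsprod : s.esymm (m + 1) = s.prod := by rw [← hcard, esymm_self]
        have hem : s.esymm m = s.prod * t.esymm 1 := by
          have h := esymm_inv s h0 1 (by omega)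
          rw [hcard] at h
          simpa using h
        have hem1 : s.esymm (m - 1) = s.prod * t.esymm 2 := by
          have h := esymm_inv s h0 2 (by omega)
          rw [hcard] at h
          have e : m + 1 - 2 = m - 1 := by omega
          rw [e] at h
          exact h
        have hch1 : (m + 1).choose m = m + 1 := Nat.choose_succ_self_right m
        have hch2 : (m + 1).choose (m + 1) = 1 := Nat.choose_self (m + 1)
        have hch3 : (m + 1).choose (m - 1) = (m + 1).choose 2 := by
          have h := Nat.choose_symm (show 2 ≤ m + 1 by omega)
          have e : m + 1 - 2 = m - 1 := by omega
          rw [e] at h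
          exact h
        rw [hsprod, hem, hem1, hch1, hch2, hch3]
        have hnt := newton_one t
        rw [hct, esymm_zero', Nat.choose_one_right, Nat.choose_zero_right] at hnt
        push_cast at hnt ⊢
        nlinarith [mul_le_mul_of_nonneg_left hnt (sq_nonneg s.prod), sq_nonneg s.prod]
    · -- m + 1 < N : derivative step
      obtain ⟨t, hct, hrel⟩ := exists_deriv_multiset s N hcard (by omega)
      have hIH := IH (N - 1) (by omega) t m hct hm1 (by omega)
      have E1 := hrel (m - 1) (by omega)
      have E2 := hrel m (by omega)
      have E3 := hrel (m + 1) (by omega)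
      have F1 : (N : ℝ) * ((N - 1).choose (m - 1) : ℝ) =
          ((N - (m - 1) : ℕ) : ℝ) * (N.choose (m - 1) : ℝ) := by
        exact_mod_cast congrArg (Nat.cast : ℕ → ℝ) (nat_id N (m - 1) (by omega))
      have F2 : (N : ℝ) * ((N - 1).choose m : ℝ) =
          ((N - m : ℕ) : ℝ) * (N.choose m : ℝ) := by
        exact_mod_cast congrArg (Nat.cast : ℕ → ℝ) (nat_id N m (by omega))
      have F3 : (N : ℝ) * ((N - 1).choose (m + 1) : ℝ) =
          ((N - (m + 1) : ℕ) : ℝ) * (N.choose (m + 1) : ℝ) := by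
        exact_mod_cast congrArg (Nat.cast : ℕ → ℝ) (nat_id N (m + 1) (by omega))
      have hbig := mul_le_mul_of_nonneg_left hIH (show (0:ℝ) ≤ (N : ℝ) ^ 4 by positivity)
      have lhs_eq : (N : ℝ) ^ 4 * (t.esymm (m - 1) * t.esymm (m + 1) * ((N - 1).choose m : ℝ) ^ 2) =
          (((N - (m - 1) : ℕ) : ℝ) * ((N - (m + 1) : ℕ) : ℝ) * ((N - m : ℕ) : ℝ) ^ 2) *
            (s.esymm (m - 1) * s.esymm (m + 1) * (N.choose m : ℝ) ^ 2) := by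
        calc (N : ℝ) ^ 4 * (t.esymm (m - 1) * t.esymm (m + 1) * ((N - 1).choose m : ℝ) ^ 2)
            = ((N : ℝ) * t.esymm (m - 1)) * ((N : ℝ) * t.esymm (m + 1)) *
                ((N : ℝ) * ((N - 1).choose m : ℝ)) ^ 2 := by ring
          _ = (((N - (m - 1) : ℕ) : ℝ) * s.esymm (m - 1)) *
                (((N - (m + 1) : ℕ) : ℝ) * s.esymm (m + 1)) *
                (((N - m : ℕ) : ℝ) * (N.choose m : ℝ)) ^ 2 := by rw [E1, E3, F2]
          _ = _ := by ring
      have rhs_eq : (N : ℝ) ^ 4 * (t.esymm m ^ 2 * (((N - 1).choose (m - 1) : ℝ) * ((N - 1).choose (m + 1) : ℝ))) =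
          (((N - (m - 1) : ℕ) : ℝ) * ((N - (m + 1) : ℕ) : ℝ) * ((N - m : ℕ) : ℝ) ^ 2) *
            (s.esymm m ^ 2 * ((N.choose (m - 1) : ℝ) * (N.choose (m + 1) : ℝ))) := by
        calc (N : ℝ) ^ 4 * (t.esymm m ^ 2 * (((N - 1).choose (m - 1) : ℝ) * ((N - 1).choose (m + 1) : ℝ)))
            = ((N : ℝ) * t.esymm m) ^ 2 *
                (((N : ℝ) * ((N - 1).choose (m - 1) : ℝ)) * ((N : ℝ) * ((N - 1).choose (m + 1) : ℝ))) := by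
              ring
          _ = (((N - m : ℕ) : ℝ) * s.esymm m) ^ 2 *
                ((((N - (m - 1) : ℕ) : ℝ) * (N.choose (m - 1) : ℝ)) *
                  (((N - (m + 1) : ℕ) : ℝ) * (N.choose (m + 1) : ℝ))) := by rw [E2, F1, F3]
          _ = _ := by ring
      rw [lhs_eq, rhs_eq] at hbig
      have hKpos : (0:ℝ) < ((N - (m - 1) : ℕ) : ℝ) * ((N - (m + 1) : ℕ) : ℝ) * ((N - m : ℕ) : ℝ) ^ 2 := by
        have k1 : 0 < N - (m - 1) := by omega
        have k2 : 0 < N - (m + 1) := by omega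
        have k3 : 0 < N - m := by omega
        have r1 : (0:ℝ) < ((N - (m - 1) : ℕ) : ℝ) := by exact_mod_cast k1
        have r2 : (0:ℝ) < ((N - (m + 1) : ℕ) : ℝ) := by exact_mod_cast k2
        have r3 : (0:ℝ) < ((N - m : ℕ) : ℝ) := by exact_mod_cast k3
        positivity
      exact le_of_mul_le_mul_left hbig hKpos

lemma gamma_del (kk : ℕ) : ∀ (s : Multiset ℝ) (a : ℝ),
    (∀ m, 1 ≤ m → m ≤ kk + 1 → 0 ≤ (a ::ₘ s).esymm m) → 0 ≤ s.esymm kk := by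
  induction kk with
  | zero =>
    intro s a _
    rw [esymm_zero']
    norm_num
  | succ k ihk =>
    intro s a h
    by_contra hneg
    push_neg at hneg
    have hk0 : 0 ≤ s.esymm k := ihk s a (fun m h1 h2 => h m h1 (by omega))
    have h2 := h (k + 1) (by omega) (by omega)
    rw [esymm_cons] at h2
    have hak : 0 < a * s.esymm k := by linarith
    have hek : 0 < s.esymm k := by
      rcases hk0.lt_or_eq with h' | h'
      · exact h'
      · exfalso
        rw [← h'] at hak
        simp at hak
    have ha : 0 < a := by nlinarith [hak, hek]
    have h1 := h (k + 2) (by omega) (le_refl _)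
    rw [esymm_cons] at h1
    have hk2 : 0 < s.esymm (k + 2) := by nlinarith
    by_cases hcard : Multiset.card s < k + 2
    · rw [esymm_eq_zero_of_lt hcard] at hk2
      exact lt_irrefl _ hk2
    push_neg at hcard
    have hnewt := newton (Multiset.card s) s (k + 1) rfl (by omega) (by omega)
    simp only [Nat.add_sub_cancel] at hnewt
    have hsq : s.esymm (k + 1) ^ 2 ≤ s.esymm k * s.esymm (k + 2) := by
      have hA : a * (-s.esymm (k + 1)) ≤ s.esymm (k + 2) := by linarith
      have hB : -s.esymm (k + 1) ≤ a * s.esymm k := by linarith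
      nlinarith [mul_le_mul_of_nonneg_left hA hek.le,
        mul_le_mul_of_nonneg_left hB (show (0:ℝ) ≤ -s.esymm (k+1) by linarith)]
    have hbin := choose_lc (Multiset.card s) k hcard
    have hbinR : ((Multiset.card s).choose k : ℝ) * ((Multiset.card s).choose (k + 2) : ℝ) <
        ((Multiset.card s).choose (k + 1) : ℝ) ^ 2 := by exact_mod_cast hbin
    have hCpos : (0:ℝ) ≤ ((Multiset.card s).choose k : ℝ) * ((Multiset.card s).choose (k + 2) : ℝ) := by
      positivity
    nlinarith [hnewt, mul_le_mul_of_nonneg_right hsq hCpos,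
      mul_lt_mul_of_pos_left hbinR (mul_pos hek hk2)]

lemma finset_del_cons {α : Type*} [DecidableEq α] (A : Finset α) (i : α) (hi : i ∈ A)
    (x : α → ℝ) : A.val.map x = x i ::ₘ ((A.erase i).val.map x) := by
  rw [Finset.erase_val, ← Multiset.map_cons, Multiset.cons_erase (Finset.mem_val.mpr hi)]

end Stmt10Aux

lemma esym_eq_esymm (n m : ℕ) (x : Fin n → ℝ) :
    esym n m x = (Finset.univ.val.map x).esymm m := by
  unfold esym
  exact (Finset.esymm_map_val x Finset.univ m).symm

lemma esymDel_eq_esymm (n m : ℕ) (i : Fin n) (x : Fin n → ℝ) :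
    esymDel n m i x = ((Finset.univ.erase i).val.map x).esymm m := by
  unfold esymDel
  exact (Finset.esymm_map_val x (Finset.univ.erase i) m).symm

end Stmt10AuxSection

/-- for `μ ∈ Γ_k` (with `2 ≤ k ≤ n`) and indices `j ≠ l`, if
`μ_j > μ_l` then `σ_{k−1;j}(μ) ≤ σ_{k−1;l}(μ)`. -/
theorem stmt10 (n k : ℕ) (hn : 1 ≤ n) (hk2 : 2 ≤ k) (hkn : k ≤ n)
    (μ : Fin n → ℝ) (hμ : μ ∈ GammaK n k) (j l : Fin n) (hjl : j ≠ l)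
    (hgt : μ l < μ j) :
    esymDel n (k - 1) j μ ≤ esymDel n (k - 1) l μ := by
  obtain ⟨k', rfl⟩ : ∃ k', k = k' + 2 := ⟨k - 2, by omega⟩
  have hk1 : k' + 2 - 1 = k' + 1 := rfl
  rw [hk1]
  have hl_in : l ∈ Finset.univ.erase j :=
    Finset.mem_erase.mpr ⟨hjl.symm, Finset.mem_univ l⟩
  have hj_in : j ∈ Finset.univ.erase l :=
    Finset.mem_erase.mpr ⟨hjl, Finset.mem_univ j⟩
  set s0 : Multiset ℝ := (((Finset.univ.erase j).erase l).val.map μ) with hs0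
  set t0 : Multiset ℝ := ((Finset.univ.erase j).val.map μ) with ht0def
  have hcomm : (Finset.univ.erase l).erase j = (Finset.univ.erase j).erase l := by
    ext a
    simp only [Finset.mem_erase, Finset.mem_univ, and_true]
    tauto
  have ht0s : t0 = μ l ::ₘ s0 :=
    Stmt10Aux.finset_del_cons (Finset.univ.erase j) l hl_in μ
  have ht0 : Finset.univ.val.map μ = μ j ::ₘ t0 :=
    Stmt10Aux.finset_del_cons Finset.univ j (Finset.mem_univ j) μ
  have hdelj : esymDel n (k' + 1) j μ = s0.esymm (k' + 1) + μ l * s0.esymm k' := by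
    rw [esymDel_eq_esymm, ← ht0def, ht0s, Stmt10Aux.esymm_cons]
  have hdell : esymDel n (k' + 1) l μ = s0.esymm (k' + 1) + μ j * s0.esymm k' := by
    rw [esymDel_eq_esymm,
      Stmt10Aux.finset_del_cons (Finset.univ.erase l) j hj_in μ, hcomm, ← hs0,
      Stmt10Aux.esymm_cons]
  have hpos : ∀ m, 1 ≤ m → m ≤ k' + 2 → 0 ≤ (μ j ::ₘ t0).esymm m := by
    intro m h1 h2
    rw [← ht0, ← esym_eq_esymm]
    exact (hμ m h1 h2).le
  have ht0pos : ∀ m, 1 ≤ m → m ≤ k' + 1 → 0 ≤ t0.esymm m := by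
    intro m h1 h2
    exact Stmt10Aux.gamma_del m t0 (μ j) (fun m' a b => hpos m' a (by omega))
  have hE : 0 ≤ s0.esymm k' := by
    apply Stmt10Aux.gamma_del k' s0 (μ l)
    intro m' a b
    rw [← ht0s]
    exact ht0pos m' a b
  rw [hdelj, hdell]
  nlinarith [hE, hgt]
end

section
/- Let n ≥ 2 and 1 ≤ k ≤ n. If λ ∈ Γ and λ_j < 0 for some index j, then there exists an index l ≠ j with λ_l > 0; moreover h̃_j(λ) ≤ h̃_l(λ) for such an l with λ_l > 0. -/
open Finset

namespace Stmt11Aux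

open Multiset Polynomial


lemma esymm_cons' (a : ℝ) (s : Multiset ℝ) (m : ℕ) :
    (a ::ₘ s).esymm (m+1) = s.esymm (m+1) + a * s.esymm m := by
  rw [Multiset.esymm, Multiset.powersetCard_cons, Multiset.map_add, Multiset.sum_add,
    Multiset.map_map]
  congr 1
  rw [Multiset.esymm, ← Multiset.sum_map_mul_left]
  congr 1
  apply Multiset.map_congr rfl
  intro t ht
  simp [Multiset.prod_cons]

lemma esymm_zero' (s : Multiset ℝ) : s.esymm 0 = 1 := by
  simp [Multiset.esymm]

lemma esymm_one'' (s : Multiset ℝ) : s.esymm 1 = s.sum := by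
  simp [Multiset.esymm, Multiset.powersetCard_one, Multiset.map_map, Function.comp_def]

lemma esymm_card (z : Multiset ℝ) : z.esymm (Multiset.card z) = z.prod := by
  have h := Multiset.prod_X_add_C_coeff z (k := 0) (Nat.zero_le _)
  rw [Polynomial.coeff_zero_eq_eval_zero, Nat.sub_zero] at h
  rw [← h, Polynomial.eval_multiset_prod, Multiset.map_map]
  rw [show (Multiset.map (eval 0 ∘ fun r => X + C r) z) = Multiset.map id z from
    Multiset.map_congr rfl (fun r _ => by simp), Multiset.map_id]

lemma esymm_gt_card (z : Multiset ℝ) {m : ℕ} (h : Multiset.card z < m) : z.esymm m = 0 := by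
  rw [Multiset.esymm, Multiset.powersetCard_eq_empty _ h]
  simp

lemma two_esymm_two (s : Multiset ℝ) :
    2 * s.esymm 2 = s.sum ^ 2 - (s.map (fun r => r^2)).sum := by
  induction s using Multiset.induction with
  | empty => rw [esymm_gt_card 0 (by simp)]; simp
  | cons a w ih =>
    have h1 : (a ::ₘ w).esymm 2 = w.esymm 2 + a * w.esymm 1 := esymm_cons' a w 1
    rw [h1, Multiset.sum_cons, Multiset.map_cons, Multiset.sum_cons, esymm_one'']
    nlinarith [ih]

lemma esymm_pred : ∀ (c : ℕ) (z : Multiset ℝ), Multiset.card z = c + 1 → (0:ℝ) ∉ z →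
    z.esymm c = z.prod * (z.map (·⁻¹)).sum := by
  intro c
  induction c with
  | zero =>
    intro z hc h0
    obtain ⟨a, rfl⟩ : ∃ a, z = {a} := by
      rcases Multiset.card_eq_one.mp hc with ⟨a, rfl⟩; exact ⟨a, rfl⟩
    have ha : a ≠ 0 := by intro h; exact h0 (by simp [h])
    rw [esymm_zero']
    simp only [Multiset.prod_singleton, Multiset.map_singleton, Multiset.sum_singleton]
    field_simp
  | succ c ih =>
    intro z hc h0
    obtain ⟨a, w, rfl⟩ : ∃ a w, z = a ::ₘ w := by
      have : 0 < Multiset.card z := by omega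
      rcases Multiset.card_pos_iff_exists_mem.mp this with ⟨a, ha⟩
      rcases Multiset.exists_cons_of_mem ha with ⟨w, rfl⟩; exact ⟨a, w, rfl⟩
    have ha : a ≠ 0 := fun h => h0 (h ▸ Multiset.mem_cons_self a w)
    have h0w : (0:ℝ) ∉ w := fun h => h0 (Multiset.mem_cons_of_mem h)
    have hcw : Multiset.card w = c + 1 := by simpa using hc
    have hprod : w.esymm (c+1) = w.prod := by rw [← hcw]; exact esymm_card w
    rw [esymm_cons', hprod, ih w hcw h0w, Multiset.prod_cons, Multiset.map_cons,
      Multiset.sum_cons]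
    field_simp

lemma esymm_pred2 : ∀ (c : ℕ) (z : Multiset ℝ), Multiset.card z = c + 2 → (0:ℝ) ∉ z →
    z.esymm c = z.prod * (z.map (·⁻¹)).esymm 2 := by
  intro c
  induction c with
  | zero =>
    intro z hc h0
    obtain ⟨a, w, rfl⟩ : ∃ a w, z = a ::ₘ w := by
      have : 0 < Multiset.card z := by omega
      rcases Multiset.card_pos_iff_exists_mem.mp this with ⟨a, ha⟩
      rcases Multiset.exists_cons_of_mem ha with ⟨w, rfl⟩; exact ⟨a, w, rfl⟩
    obtain ⟨b, rfl⟩ : ∃ b, w = {b} := by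
      have : Multiset.card w = 1 := by simpa using hc
      rcases Multiset.card_eq_one.mp this with ⟨b, rfl⟩; exact ⟨b, rfl⟩
    have ha : a ≠ 0 := fun h => h0 (h ▸ Multiset.mem_cons_self a _)
    have hb : b ≠ 0 := fun h => h0 (by simp [h])
    rw [esymm_zero']
    have h2 : ((a ::ₘ ({b} : Multiset ℝ)).map (·⁻¹)).esymm 2 = a⁻¹ * b⁻¹ := by
      have : Multiset.card ((a ::ₘ ({b} : Multiset ℝ)).map (·⁻¹)) = 2 := by simp
      rw [← this, esymm_card]
      simp
    rw [h2]
    simp only [Multiset.prod_cons, Multiset.prod_singleton]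
    field_simp
  | succ c ih =>
    intro z hc h0
    obtain ⟨a, w, rfl⟩ : ∃ a w, z = a ::ₘ w := by
      have : 0 < Multiset.card z := by omega
      rcases Multiset.card_pos_iff_exists_mem.mp this with ⟨a, ha⟩
      rcases Multiset.exists_cons_of_mem ha with ⟨w, rfl⟩; exact ⟨a, w, rfl⟩
    have ha : a ≠ 0 := fun h => h0 (h ▸ Multiset.mem_cons_self a w)
    have h0w : (0:ℝ) ∉ w := fun h => h0 (Multiset.mem_cons_of_mem h)
    have hcw : Multiset.card w = c + 2 := by simpa using hc
    have h1 : w.esymm (c+1) = w.prod * (w.map (·⁻¹)).sum :=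
      esymm_pred (c+1) w (by omega) h0w
    rw [esymm_cons', h1, ih w hcw h0w, Multiset.map_cons, esymm_cons', esymm_one'',
      Multiset.prod_cons]
    field_simp
    ring

lemma newton_zero : ∀ (N : ℕ) (z : Multiset ℝ), Multiset.card z = N →
    ∀ m : ℕ, 1 ≤ m → m + 1 ≤ N → z.esymm m = 0 →
    z.esymm (m+1) * z.esymm (m-1) ≤ 0 := by
  intro N
  induction N using Nat.strong_induction_on with
  | _ N ihN =>
  intro z hcard m hm1 hmN h0
  rcases eq_or_lt_of_le hmN with hNe | hNlt
  · -- base case N = m + 1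
    obtain ⟨q, rfl⟩ : ∃ q, m = q + 1 := ⟨m - 1, by omega⟩
    have hzcard : Multiset.card z = q + 2 := by omega
    have htop : z.esymm (q+1+1) = z.prod := by
      rw [show q+1+1 = Multiset.card z by omega]; exact esymm_card z
    by_cases hmem : (0:ℝ) ∈ z
    · rw [htop, Multiset.prod_eq_zero hmem, zero_mul]
    · have hprodne : z.prod ≠ 0 := Multiset.prod_ne_zero hmem
      have h1 : z.esymm (q+1) = z.prod * (z.map (·⁻¹)).sum :=
        esymm_pred (q+1) z (by omega) hmem
      have hsum0 : (z.map (·⁻¹)).sum = 0 := by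
        rcases mul_eq_zero.mp (h1 ▸ h0) with h | h
        · exact absurd h hprodne
        · exact h
      have h2 : z.esymm q = z.prod * (z.map (·⁻¹)).esymm 2 :=
        esymm_pred2 q z hzcard hmem
      have h3 : 2 * (z.map (·⁻¹)).esymm 2 =
          (z.map (·⁻¹)).sum ^ 2 - ((z.map (·⁻¹)).map (fun r => r^2)).sum :=
        two_esymm_two _
      have h4 : (z.map (·⁻¹)).esymm 2 ≤ 0 := by
        have hs : 0 ≤ ((z.map (·⁻¹)).map (fun r => r^2)).sum :=
          Multiset.sum_nonneg (fun x hx => by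
            rcases Multiset.mem_map.mp hx with ⟨r, _, rfl⟩; positivity)
        nlinarith [h3, hsum0]
      rw [htop, show q+1-1 = q by omega, h2]
      nlinarith [sq_nonneg z.prod, h4]
  · -- inductive step, N ≥ m + 2
    have hmN2 : m + 2 ≤ N := hNlt
    have hN1 : 1 ≤ N := by omega
    set P : Polynomial ℝ := (z.map (fun r => X + C r)).prod with hP
    have hmon : ∀ p ∈ z.map (fun r : ℝ => X + C r), p.Monic := fun p hp => by
      rcases Multiset.mem_map.mp hp with ⟨r, _, rfl⟩; exact monic_X_add_C r
    have hPmonic : P.Monic := monic_multiset_prod_of_monic z _ (fun r _ => monic_X_add_C r)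
    have hPdeg : P.natDegree = N := by
      rw [hP, natDegree_multiset_prod_of_monic _ hmon, Multiset.map_map]
      rw [show Multiset.map (natDegree ∘ fun r => X + C r) z = Multiset.map (fun _ => 1) z from
        Multiset.map_congr rfl (fun r _ => by simp [natDegree_X_add_C])]
      simp [hcard]
    have hProots : P.roots = z.map (fun r => -r) := by
      have h2 : P = ((z.map (fun r => -r)).map (fun a => X - C a)).prod := by
        rw [Multiset.map_map]
        apply congrArg Multiset.prod
        apply Multiset.map_congr rfl
        intro r _
        simp [sub_neg_eq_add]
      rw [h2, roots_multiset_prod_X_sub_C]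
    set Q := derivative P with hQ
    have hcardP : Multiset.card P.roots = N := by rw [hProots]; simpa using hcard
    have hd1 := Polynomial.card_roots_le_derivative P
    rw [← hQ] at hd1
    have hd2 := Polynomial.natDegree_derivative_le P
    rw [← hQ, hPdeg] at hd2
    have hd3 := Polynomial.card_roots' Q
    have hQcard1 : Multiset.card Q.roots = Q.natDegree := by omega
    have hQcard2 : Multiset.card Q.roots = N - 1 := by omega
    have hfact : Polynomial.C Q.leadingCoeff * (Q.roots.map fun a => X - C a).prod = Q :=
      Polynomial.C_leadingCoeff_mul_prod_multiset_X_sub_C hQcard1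
    set w : Multiset ℝ := Q.roots.map (fun r => -r) with hw
    have hcardw : Multiset.card w = N - 1 := by rw [hw]; simpa using hQcard2
    have hQdeg : Q.natDegree = N - 1 := by omega
    have hlc : Q.leadingCoeff = (N : ℝ) := by
      have h1 : Q.coeff (N-1) = P.coeff (N-1+1) * ((N-1 : ℕ)+1) := by
        rw [hQ, Polynomial.coeff_derivative]
      have h2 : P.coeff (N-1+1) = 1 := by
        rw [show N-1+1 = N by omega, ← hPdeg]
        exact hPmonic.coeff_natDegree
      rw [Polynomial.leadingCoeff, hQdeg, h1, h2, one_mul]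
      push_cast [Nat.cast_sub hN1]
      ring
    have hfact2 : Q = Polynomial.C (N : ℝ) * (w.map fun a => X + C a).prod := by
      rw [← hfact, hlc, hw, Multiset.map_map]
      congr 1
      apply congrArg Multiset.prod
      apply Multiset.map_congr rfl
      intro r _
      simp [Function.comp_def, Polynomial.C_neg, sub_eq_add_neg]
    have key : ∀ m' : ℕ, m' ≤ N - 1 →
        (N : ℝ) * w.esymm m' = ((N - m' : ℕ) : ℝ) * z.esymm m' := by
      intro m' hm'
      have hA : Q.coeff (N-1-m') = P.coeff (N-1-m'+1) * ((N-1-m' : ℕ)+1) := by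
        rw [hQ, Polynomial.coeff_derivative]
      have hB : P.coeff (N-1-m'+1) = z.esymm m' := by
        rw [hP, Multiset.prod_X_add_C_coeff z (by omega : N-1-m'+1 ≤ Multiset.card z)]
        congr 1
        omega
      have hC : Q.coeff (N-1-m') = (N : ℝ) * w.esymm m' := by
        rw [hfact2, Polynomial.coeff_C_mul,
          Multiset.prod_X_add_C_coeff w (by omega : N-1-m' ≤ Multiset.card w)]
        congr 2
        omega
      rw [← hC, hA, hB]
      have hc3 : ((N-1-m' : ℕ) : ℝ) + 1 = ((N - m' : ℕ) : ℝ) := by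
        norm_cast
        omega
      rw [hc3]
      ring
    -- esymm w m = 0
    have hw0 : w.esymm m = 0 := by
      have := key m (by omega)
      have hNne : (N:ℝ) ≠ 0 := by positivity
      rw [h0, mul_zero] at this
      exact (mul_eq_zero.mp this).resolve_left hNne
    have hIH := ihN (N-1) (by omega) w hcardw m hm1 (by omega) hw0
    have k1 := key (m+1) (by omega)
    have k2 := key (m-1) (by omega)
    -- positivity of factors
    have c1 : (0:ℝ) < ((N - (m+1) : ℕ) : ℝ) := by
      have h : 0 < N - (m+1) := by omega
      exact_mod_cast h
    have c2 : (0:ℝ) < ((N - (m-1) : ℕ) : ℝ) := by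
      have h : 0 < N - (m-1) := by omega
      exact_mod_cast h
    have cN : (0:ℝ) < (N:ℝ) := by
      have h : 0 < N := by omega
      exact_mod_cast h
    have h5 : (((N - (m+1) : ℕ) : ℝ) * ((N - (m-1) : ℕ) : ℝ)) *
        (z.esymm (m+1) * z.esymm (m-1)) ≤ 0 := by
      have heq : (((N - (m+1) : ℕ) : ℝ) * ((N - (m-1) : ℕ) : ℝ)) *
          (z.esymm (m+1) * z.esymm (m-1)) =
          ((N:ℝ) * w.esymm (m+1)) * ((N:ℝ) * w.esymm (m-1)) := by
        rw [k1, k2]; ring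
      rw [heq]
      nlinarith [hIH, sq_nonneg ((N:ℝ))]
    exact (mul_le_mul_iff_right₀ (mul_pos c1 c2)).mp (by rw [mul_zero]; exact h5)

lemma shift_pos (z : Multiset ℝ) (k : ℕ) (hcard : k ≤ Multiset.card z)
    (hpos : ∀ i, 1 ≤ i → i ≤ k → 0 < z.esymm i) (t : ℝ) (ht : 0 ≤ t)
    (j : ℕ) (hj1 : 1 ≤ j) (hjk : j ≤ k) : 0 < (z.map (· + t)).esymm j := by
  set N := Multiset.card z with hN
  have hjN : j ≤ N := le_trans hjk hcard
  set P : Polynomial ℝ := (z.map (fun r => X + C r)).prod with hP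
  have hPdeg : P.natDegree = N := by
    rw [hP, natDegree_multiset_prod_of_monic _ (fun p hp => by
      rcases Multiset.mem_map.mp hp with ⟨r, _, rfl⟩; exact monic_X_add_C r), Multiset.map_map]
    rw [show Multiset.map (natDegree ∘ fun r => X + C r) z = Multiset.map (fun _ => 1) z from
      Multiset.map_congr rfl (fun r _ => by simp [natDegree_X_add_C])]
    simp [hN]
  -- the shifted product is P.comp (X + C t)
  have hcomp : ((z.map (· + t)).map (fun r => X + C r)).prod = P.comp (X + C t) := by
    rw [hP, Polynomial.multiset_prod_comp, Multiset.map_map, Multiset.map_map]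
    apply congrArg Multiset.prod
    apply Multiset.map_congr rfl
    intro r _
    simp [Polynomial.add_comp, Polynomial.X_comp, Polynomial.C_comp]
    ring
  have hcards : Multiset.card (z.map (· + t)) = N := by simp [hN]
  have hesymm : (z.map (· + t)).esymm j =
      ((z.map (· + t)).map (fun r => X + C r)).prod.coeff (N - j) := by
    rw [Multiset.prod_X_add_C_coeff _ (by rw [hcards]; omega : N - j ≤ Multiset.card (z.map (· + t)))]
    rw [hcards]
    congr 1
    omega
  rw [hesymm, hcomp, ← Polynomial.taylor_apply, Polynomial.taylor_coeff]
  have hdeg2 : (Polynomial.hasseDeriv (N-j) P).natDegree < j + 1 := by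
    have := Polynomial.natDegree_hasseDeriv_le P (N-j)
    omega
  rw [Polynomial.eval_eq_sum_range' hdeg2]
  have hterm : ∀ i, i ≤ j → (Polynomial.hasseDeriv (N-j) P).coeff i =
      ((i + (N-j)).choose (N-j) : ℝ) * z.esymm (j - i) := by
    intro i hi
    rw [Polynomial.hasseDeriv_coeff]
    congr 1
    rw [hP, Multiset.prod_X_add_C_coeff z (by omega : i + (N-j) ≤ Multiset.card z)]
    congr 1
    omega
  apply Finset.sum_pos'
  · intro i hi
    rw [Finset.mem_range] at hi
    rw [hterm i (by omega)]
    apply mul_nonneg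
    apply mul_nonneg
    · positivity
    · rcases Nat.eq_zero_or_pos (j - i) with h | h
      · rw [h]; simp [Multiset.esymm]
      · exact le_of_lt (hpos (j-i) h (by omega))
    · positivity
  · refine ⟨0, by simp, ?_⟩
    rw [hterm 0 (by omega)]
    simp only [Nat.zero_add, Nat.choose_self, Nat.cast_one, one_mul, pow_zero, mul_one,
      Nat.sub_zero]
    exact hpos j hj1 hjk

noncomputable def Es {n : ℕ} (m : ℕ) (s : Finset (Fin n)) (x : Fin n → ℝ) : ℝ :=
  ∑ A ∈ s.powersetCard m, ∏ i ∈ A, x i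

variable {n : ℕ}

lemma Es_eq (m : ℕ) (s : Finset (Fin n)) (x : Fin n → ℝ) :
    Es m s x = (Multiset.map x s.val).esymm m := (Finset.esymm_map_val x s m).symm

lemma val_cons {i : Fin n} {s : Finset (Fin n)} (h : i ∈ s) (x : Fin n → ℝ) :
    Multiset.map x s.val = x i ::ₘ Multiset.map x (s.erase i).val := by
  conv_lhs => rw [← Multiset.cons_erase (show i ∈ s.val from h)]
  rw [Multiset.map_cons]
  congr 1

lemma Es_decomp {i : Fin n} {s : Finset (Fin n)} (h : i ∈ s) (m : ℕ) (x : Fin n → ℝ) :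
    Es (m+1) s x = x i * Es m (s.erase i) x + Es (m+1) (s.erase i) x := by
  rw [Es_eq, Es_eq, Es_eq, val_cons h, esymm_cons']
  ring

lemma Es_ones (m : ℕ) (s : Finset (Fin n)) : Es m s (fun _ => 1) = (s.card.choose m : ℝ) := by
  simp [Es, Finset.prod_const_one, Finset.card_powersetCard]

lemma Es_congr (m : ℕ) (s : Finset (Fin n)) {x y : Fin n → ℝ} (h : ∀ v, x v = y v) :
    Es m s x = Es m s y := by
  have : x = y := funext h
  rw [this]

lemma Es_cont (m : ℕ) (s : Finset (Fin n)) : Continuous (Es m s) := by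
  apply continuous_finset_sum
  intro A _
  exact continuous_finset_prod _ (fun i _ => continuous_apply i)

lemma Es_zero (m : ℕ) {s : Finset (Fin n)} (x : Fin n → ℝ) (h : s.card < m) :
    Es m s x = 0 := by
  rw [Es, Finset.powersetCard_eq_empty.mpr h]
  simp

-- segment membership
lemma seg_mem (s : Finset (Fin n)) (x : Fin n → ℝ) (k : ℕ) (hcard : k ≤ s.card)
    (hpos : ∀ m, 1 ≤ m → m ≤ k → 0 < Es m s x) {u : ℝ} (hu0 : 0 ≤ u) (hu1 : u ≤ 1) :
    ∀ m, 1 ≤ m → m ≤ k → 0 < Es m s (fun v => (1-u) * x v + u) := by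
  intro m hm1 hmk
  rcases eq_or_lt_of_le hu1 with rfl | hu
  · rw [Es_congr m s (y := fun _ => 1) (fun v => by ring), Es_ones]
    exact_mod_cast Nat.choose_pos (le_trans hmk hcard)
  · have hc : 0 < 1 - u := by linarith
    rw [Es_eq]
    have hmap : Multiset.map (fun v => (1-u) * x v + u) s.val =
        ((Multiset.map x s.val).map (fun r => (1-u) * r)).map (· + u) := by
      rw [Multiset.map_map, Multiset.map_map]
      rfl
    rw [hmap]
    apply shift_pos _ k _ _ u hu0 m hm1 hmk
    · simp [hcard]
    · intro i hi1 hik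
      have hsc : ((Multiset.map x s.val).map (fun r => (1-u) * r)).esymm i =
          (1-u)^i * (Multiset.map x s.val).esymm i := by
        have := Multiset.pow_smul_esymm (1-u) i (Multiset.map x s.val)
        simpa [smul_eq_mul] using this.symm
      rw [hsc]
      apply mul_pos (by positivity)
      rw [← Es_eq]
      exact hpos i hi1 hik

-- the master lemma
lemma master : ∀ (k : ℕ) (s : Finset (Fin n)) (x : Fin n → ℝ), k ≤ s.card →
    (∀ m, 1 ≤ m → m ≤ k → 0 < Es m s x) →
    ∀ i ∈ s, ∀ m, 1 ≤ m → m + 1 ≤ k → 0 < Es m (s.erase i) x := by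
  intro k
  induction k with
  | zero => intro s x _ _ i hi m hm1 hmk; omega
  | succ k ih =>
    intro s x hcard hpos i hi m hm1 hmk
    rcases Nat.lt_or_ge (m+1) (k+1) with hlt | hge
    · -- m + 1 ≤ k : use induction hypothesis
      exact ih s x (by omega) (fun m' h1 h2 => hpos m' h1 (by omega)) i hi m hm1 (by omega)
    · -- m = k
      have hmk' : m = k := by omega
      subst hmk'
      by_contra hcon
      push_neg at hcon
      -- IVT setup
      set f : ℝ → ℝ := fun u => Es m (s.erase i) (fun v => (1-u) * x v + u) with hf
      have hf0 : f 0 ≤ 0 := by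
        have : (fun v => (1-(0:ℝ)) * x v + 0) = x := by funext v; ring
        simpa [hf, this] using hcon
      have hf1 : 0 < f 1 := by
        rw [hf]
        simp only
        rw [Es_congr m (s.erase i) (y := fun _ => 1) (fun v => by ring), Es_ones]
        have : m ≤ (s.erase i).card := by
          rw [Finset.card_erase_of_mem hi]
          omega
        exact_mod_cast Nat.choose_pos this
      have hfc : ContinuousOn f (Set.Icc 0 1) := by
        apply Continuous.continuousOn
        apply (Es_cont m (s.erase i)).comp
        exact continuous_pi (fun v => by continuity)
      have hivt := intermediate_value_Icc (by norm_num : (0:ℝ) ≤ 1) hfc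
      have h0mem : (0:ℝ) ∈ Set.Icc (f 0) (f 1) := ⟨hf0, le_of_lt hf1⟩
      rcases hivt h0mem with ⟨u, hu, hfu⟩
      -- the point y on the segment
      set y : Fin n → ℝ := fun v => (1-u) * x v + u with hy
      have hymem : ∀ m', 1 ≤ m' → m' ≤ m+1 → 0 < Es m' s y :=
        seg_mem s x (m+1) hcard hpos hu.1 hu.2
      have hEk : Es m (s.erase i) y = 0 := hfu
      -- E_{m+1}(erase) positive via decomposition
      have hdec := Es_decomp hi m y
      have hEk1 : 0 < Es (m+1) (s.erase i) y := by
        have := hymem (m+1) (by omega) (le_refl _)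
        rw [hdec, hEk, mul_zero, zero_add] at this
        exact this
      -- case on card
      rcases Nat.lt_or_ge (s.card) (m+2) with hsc | hsc
      · -- card s = m+1, erase has card m < m+1
        have : Es (m+1) (s.erase i) y = 0 := by
          apply Es_zero
          rw [Finset.card_erase_of_mem hi]
          omega
        rw [this] at hEk1
        exact lt_irrefl _ hEk1
      · -- Newton
        have hzcard : m + 1 ≤ Multiset.card (Multiset.map y (s.erase i).val) := by
          simp only [Multiset.card_map]
          rw [show Multiset.card (s.erase i).val = (s.erase i).card from rfl,
            Finset.card_erase_of_mem hi]
          omega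
        have hnewton := newton_zero (Multiset.card (Multiset.map y (s.erase i).val))
          (Multiset.map y (s.erase i).val) rfl m hm1 hzcard
          (by rw [← Es_eq]; exact hEk)
        rw [← Es_eq, ← Es_eq] at hnewton
        -- E_{m-1}(erase) > 0
        have hEkm1 : 0 < Es (m-1) (s.erase i) y := by
          rcases Nat.lt_or_ge 1 m with hk1 | hk1
          · exact ih s y (by omega) (fun m' h1 h2 => hymem m' h1 (by omega)) i hi (m-1)
              (by omega) (by omega)
          · -- m = 1 : E_0 = 1
            have hk : m = 1 := by omega
            rw [hk]
            norm_num [Es]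
        nlinarith [hEk1, hEkm1, hnewton]

lemma esym_hasFDerivAt (k : ℕ) (y : Fin n → ℝ) :
    HasFDerivAt (esym n k)
      (∑ A ∈ Finset.univ.powersetCard k, ∑ i ∈ A,
        (∏ v ∈ A.erase i, y v) • ContinuousLinearMap.proj (R := ℝ) (φ := fun _ : Fin n => ℝ) i)
      y := by
  have : HasFDerivAt (fun x : Fin n → ℝ => ∑ A ∈ Finset.univ.powersetCard k, ∏ i ∈ A, x i)
      (∑ A ∈ Finset.univ.powersetCard k, ∑ i ∈ A,
        (∏ v ∈ A.erase i, y v) • ContinuousLinearMap.proj (R := ℝ) (φ := fun _ : Fin n => ℝ) i)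
      y := by
    apply HasFDerivAt.fun_sum
    intro A _
    exact hasFDerivAt_finset_prod
  exact this

lemma esym_deriv_apply (k : ℕ) (y : Fin n → ℝ) (i : Fin n) :
    (∑ A ∈ Finset.univ.powersetCard (k+1), ∑ i' ∈ A,
        (∏ v ∈ A.erase i', y v) • ContinuousLinearMap.proj (R := ℝ) (φ := fun _ : Fin n => ℝ) i')
      (Pi.single i 1) = esymDel n k i y := by
  rw [ContinuousLinearMap.sum_apply]
  have hterm : ∀ A ∈ Finset.univ.powersetCard (k+1),
      (∑ i' ∈ A, (∏ v ∈ A.erase i', y v) •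
        ContinuousLinearMap.proj (R := ℝ) (φ := fun _ : Fin n => ℝ) i') (Pi.single i 1)
      = if i ∈ A then ∏ v ∈ A.erase i, y v else 0 := by
    intro A _
    rw [ContinuousLinearMap.sum_apply]
    by_cases hiA : i ∈ A
    · rw [if_pos hiA]
      rw [Finset.sum_eq_single_of_mem i hiA]
      · simp [Pi.single_apply]
      · intro b _ hbne
        simp [ContinuousLinearMap.proj_apply, Pi.single_apply, hbne]
    · rw [if_neg hiA]
      apply Finset.sum_eq_zero
      intro b hb
      have : b ≠ i := fun h => hiA (h ▸ hb)
      simp [ContinuousLinearMap.proj_apply, Pi.single_apply, this]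
  rw [Finset.sum_congr rfl hterm, Finset.sum_ite, Finset.sum_const, smul_zero, add_zero]
  -- bijection
  rw [esymDel]
  apply Finset.sum_nbij' (i := fun A => A.erase i) (j := fun B => insert i B)
  · intro A hA
    simp only [Finset.mem_filter, Finset.mem_powersetCard] at hA
    rw [Finset.mem_powersetCard]
    constructor
    · intro v hv
      rw [Finset.mem_erase] at hv ⊢
      exact ⟨hv.1, Finset.mem_univ v⟩
    · rw [Finset.card_erase_of_mem hA.2, hA.1.2]
      omega
  · intro B hB
    rw [Finset.mem_powersetCard] at hB
    simp only [Finset.mem_filter, Finset.mem_powersetCard]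
    have hiB : i ∉ B := fun h => (Finset.mem_erase.mp (hB.1 h)).1 rfl
    refine ⟨⟨fun v _ => Finset.mem_univ v, ?_⟩, Finset.mem_insert_self i B⟩
    rw [Finset.card_insert_of_notMem hiB, hB.2]
  · intro A hA
    simp only [Finset.mem_filter] at hA
    exact Finset.insert_erase hA.2
  · intro B hB
    rw [Finset.mem_powersetCard] at hB
    have hiB : i ∉ B := fun h => (Finset.mem_erase.mp (hB.1 h)).1 rfl
    exact Finset.erase_insert hiB
  · intro A hA
    rfl

-- derivative of sigmaPow
lemma sigmaPow_hasFDerivAt (k : ℕ) (y : Fin n → ℝ) (hpos : 0 < esym n k y) :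
    HasFDerivAt (sigmaPow n k)
      ((((1:ℝ)/k) * (esym n k y) ^ ((1:ℝ)/k - 1)) •
        (∑ A ∈ Finset.univ.powersetCard k, ∑ i ∈ A,
          (∏ v ∈ A.erase i, y v) • ContinuousLinearMap.proj (R := ℝ) (φ := fun _ : Fin n => ℝ) i))
      y := by
  have h := (esym_hasFDerivAt (n := n) k y).rpow_const (p := (1:ℝ)/k) (Or.inl (ne_of_gt hpos))
  exact h

end Stmt11Aux

/-- if `λ ∈ Γ` and `λ_j < 0`, then there is `l ≠ j` with
`λ_l > 0`; moreover `h̃_j(λ) ≤ h̃_l(λ)` for every such `l` with `λ_l > 0`. -/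
theorem stmt11 (n k : ℕ) (hn : 2 ≤ n) (hk1 : 1 ≤ k) (hkn : k ≤ n)
    (lam : Fin n → ℝ) (hlam : lam ∈ GammaCone n k) (j : Fin n) (hj : lam j < 0) :
    (∃ l : Fin n, l ≠ j ∧ 0 < lam l) ∧
    ∀ l : Fin n, l ≠ j → 0 < lam l → htilde n k j lam ≤ htilde n k l lam := by
  classical
  obtain ⟨k', rfl⟩ : ∃ k', k = k' + 1 := ⟨k - 1, by omega⟩
  set k := k' + 1 with hkdef
  set y : Fin n → ℝ := mu n lam with hy
  have hGam : ∀ m, 1 ≤ m → m ≤ k → 0 < esym n m y := fun m h1 h2 => hlam m h1 h2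
  have hEs : ∀ m, 1 ≤ m → m ≤ k → 0 < Stmt11Aux.Es m Finset.univ y := by
    intro m h1 h2
    have := hGam m h1 h2
    simpa [Stmt11Aux.Es, esym] using this
  -- sum of lam is positive
  have hS : 0 < ∑ v, lam v := by
    have h1 : 0 < esym n 1 y := hGam 1 le_rfl hk1
    have h2 : esym n 1 y = ∑ v, y v := by
      rw [show esym n 1 y = Stmt11Aux.Es 1 Finset.univ y from rfl, Stmt11Aux.Es_eq,
        Stmt11Aux.esymm_one'']
      rfl
    have h3 : ∑ v, y v = ((n : ℝ) - 1) * ∑ v, lam v := by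
      rw [hy]
      simp only [mu, Finset.sum_sub_distrib, Finset.sum_const, Finset.card_univ,
        Fintype.card_fin, nsmul_eq_mul]
      ring
    rw [h2, h3] at h1
    have hn1 : (0:ℝ) < (n : ℝ) - 1 := by
      have : (2:ℝ) ≤ (n:ℝ) := by exact_mod_cast hn
      linarith
    nlinarith [h1, hn1]
  have hex : ∃ l : Fin n, l ≠ j ∧ 0 < lam l := by
    by_contra hcon
    push_neg at hcon
    have h2 : ∑ v ∈ Finset.univ.erase j, lam v ≤ 0 :=
      Finset.sum_nonpos (fun v hv => by
        rcases lt_or_ge 0 (lam v) with h | h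
        · exact absurd h (not_lt.mpr (le_of_lt (by
            have := hcon v (Finset.mem_erase.mp hv).1
            linarith)))
        · exact h)
    have h3 : lam j + ∑ v ∈ Finset.univ.erase j, lam v = ∑ v, lam v :=
      Finset.add_sum_erase _ _ (Finset.mem_univ j)
    linarith
  refine ⟨hex, ?_⟩
  intro l hlj hl
  -- derivative computation
  have hpos : 0 < esym n k y := hGam k hk1 le_rfl
  have hder := Stmt11Aux.sigmaPow_hasFDerivAt (n := n) k y hpos
  have hfd : fderiv ℝ (sigmaPow n k) y = _ := hder.fderiv
  set c : ℝ := ((1:ℝ)/k) * (esym n k y) ^ ((1:ℝ)/k - 1) with hc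
  have hcpos : 0 < c := by
    rw [hc]
    apply mul_pos
    · have hk0 : 0 < k := by omega
      apply div_pos one_pos
      exact_mod_cast hk0
    · exact Real.rpow_pos_of_pos hpos _
  have htl : ∀ i : Fin n, htilde n k i lam = c * esymDel n k' i y := by
    intro i
    rw [htilde, ← hy, hfd, ContinuousLinearMap.smul_apply, smul_eq_mul]
    congr 1
    exact Stmt11Aux.esym_deriv_apply (n := n) k' y i
  rw [htl j, htl l]
  apply mul_le_mul_of_nonneg_left _ (le_of_lt hcpos)
  -- compare esymDel
  have hyjl : y j - y l = lam l - lam j := by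
    rw [hy]; simp only [mu]; ring
  have hjlpos : 0 < y j - y l := by rw [hyjl]; linarith
  rcases Nat.eq_zero_or_pos k' with rfl | hk'pos
  · -- k' = 0
    simp [esymDel]
  · obtain ⟨m, rfl⟩ : ∃ m, k' = m + 1 := ⟨k' - 1, by omega⟩
    have hlmem : l ∈ Finset.univ.erase j := Finset.mem_erase.mpr ⟨hlj, Finset.mem_univ l⟩
    have hjmem : j ∈ Finset.univ.erase l := Finset.mem_erase.mpr ⟨fun h => hlj h.symm,
      Finset.mem_univ j⟩
    have hcardu : (Finset.univ : Finset (Fin n)).card = n := by simp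
    -- nonnegativity of the doubly-erased esym
    have hpair : 0 ≤ Stmt11Aux.Es m ((Finset.univ.erase j).erase l) y := by
      rcases Nat.eq_zero_or_pos m with rfl | hmpos
      · simp [Stmt11Aux.Es]
      · apply le_of_lt
        have hfirst : ∀ m'', 1 ≤ m'' → m'' + 1 ≤ k → 0 < Stmt11Aux.Es m''
            (Finset.univ.erase j) y :=
          Stmt11Aux.master k Finset.univ y (by rw [hcardu]; omega) hEs j (Finset.mem_univ j)
        apply Stmt11Aux.master (m+1) (Finset.univ.erase j) y
        · rw [Finset.card_erase_of_mem (Finset.mem_univ j), hcardu]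
          omega
        · intro m'' h1 h2
          exact hfirst m'' h1 (by omega)
        · exact hlmem
        · omega
        · omega
    have hd1 := Stmt11Aux.Es_decomp hlmem m y
    have hd2 := Stmt11Aux.Es_decomp hjmem m y
    have hcomm : (Finset.univ.erase l).erase j = (Finset.univ.erase j).erase l := by
      ext v
      simp only [Finset.mem_erase, Finset.mem_univ, and_true]
      tauto
    rw [hcomm] at hd2
    have heq1 : esymDel n (m+1) j y = Stmt11Aux.Es (m+1) (Finset.univ.erase j) y := rfl
    have heq2 : esymDel n (m+1) l y = Stmt11Aux.Es (m+1) (Finset.univ.erase l) y := rfl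
    rw [heq1, heq2, hd1, hd2]
    have hkey : (y l - y j) * Stmt11Aux.Es m ((Finset.univ.erase j).erase l) y ≤ 0 :=
      mul_nonpos_iff.mpr (Or.inr ⟨by linarith, hpair⟩)
    nlinarith [hkey]
end

section
/- Let n ≥ 2 and 1 ≤ k ≤ n. There exists ε > 0 depending only on n and k such that the following holds: if U ∈ ℝⁿ satisfies U₁ ≥ U₂ ≥ … ≥ U_n, U₁ > 0, and |U_i| ≤ ε U₁ for all i ≥ 2, and if η ∈ ℝⁿ is defined by η_j = Σ_{i≠j} U_i, then |η₁| ≤ (n−1) ε U₁, (1 − (n−2)ε) U₁ ≤ η_j ≤ (1 + (n−2)ε) U₁ for all j ≥ 2, and σ_{k−1}(η) ≥ (1/2) U₁^{k−1}. -/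
open Finset

set_option maxHeartbeats 1000000 in
/-- there is `ε > 0` depending only on `n, k` such that if
`U₁ ≥ U₂ ≥ … ≥ U_n`, `U₁ > 0` and `|U_i| ≤ ε U₁` for all `i ≥ 2`, and
`η_j = ∑_{i ≠ j} U_i`, then `|η₁| ≤ (n−1) ε U₁`,
`(1 − (n−2)ε) U₁ ≤ η_j ≤ (1 + (n−2)ε) U₁` for `j ≥ 2`, and
`σ_{k−1}(η) ≥ (1/2) U₁^{k−1}`. -/
theorem stmt13 (n k : ℕ) (hn : 2 ≤ n) (hk1 : 1 ≤ k) (hkn : k ≤ n) :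
    ∃ ε : ℝ, 0 < ε ∧ ∀ U η : Fin n → ℝ,
      (∀ i j : Fin n, i ≤ j → U j ≤ U i) →
      0 < U ⟨0, by omega⟩ →
      (∀ i : Fin n, i ≠ ⟨0, by omega⟩ → |U i| ≤ ε * U ⟨0, by omega⟩) →
      (∀ j : Fin n, η j = ∑ i ∈ Finset.univ.erase j, U i) →
      |η ⟨0, by omega⟩| ≤ ((n : ℝ) - 1) * ε * U ⟨0, by omega⟩ ∧
      (∀ j : Fin n, j ≠ ⟨0, by omega⟩ →
        (1 - ((n : ℝ) - 2) * ε) * U ⟨0, by omega⟩ ≤ η j ∧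
        η j ≤ (1 + ((n : ℝ) - 2) * ε) * U ⟨0, by omega⟩) ∧
      (1 / 2) * (U ⟨0, by omega⟩) ^ (k - 1) ≤ esym n (k - 1) η := by
  have hn2 : (2:ℝ) ≤ (n:ℝ) := by exact_mod_cast hn
  set A : ℝ := (n:ℝ)^2 + 4^n * n with hA
  have hApos : 0 < A := by positivity
  refine ⟨1 / (2 * A), by positivity, ?_⟩
  set ε : ℝ := 1 / (2 * A) with hεdef
  have hεpos : 0 < ε := by positivity
  have hεA : A * ε = 1/2 := by
    rw [hεdef]; field_simp
  have hsum : (n:ℝ)^2 * ε + 4^n * n * ε = 1/2 := by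
    rw [← hεA, hA]; ring
  have hδ : ((n:ℝ) - 2) * ε ≤ 1/2 := by
    have h1 : (n:ℝ) - 2 ≤ A := by
      rw [hA]
      have h4 : (1:ℝ) ≤ 4^n := one_le_pow₀ (by norm_num)
      nlinarith
    calc ((n:ℝ)-2)*ε ≤ A * ε := mul_le_mul_of_nonneg_right h1 hεpos.le
      _ = 1/2 := hεA
  intro U η hmono hU1 hsmall hη
  set i0 : Fin n := ⟨0, by omega⟩ with hi0
  set U1 := U i0 with hU1def
  have hcard1 : (Finset.univ.erase i0).card = n - 1 := by
    rw [card_erase_of_mem (mem_univ _), card_univ, Fintype.card_fin]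
  -- Claim A
  have claimA : |η i0| ≤ ((n:ℝ) - 1) * ε * U1 := by
    calc |η i0| ≤ ∑ i ∈ Finset.univ.erase i0, |U i| := by
          rw [hη]; exact Finset.abs_sum_le_sum_abs _ _
      _ ≤ ∑ _i ∈ Finset.univ.erase i0, ε * U1 :=
          Finset.sum_le_sum (fun i hi => hsmall i (ne_of_mem_erase hi))
      _ = ((n - 1 : ℕ) : ℝ) * (ε * U1) := by rw [Finset.sum_const, hcard1, nsmul_eq_mul]
      _ = ((n:ℝ) - 1) * ε * U1 := by
          rw [Nat.cast_sub (by omega)]; push_cast; ring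
  -- Claim B
  have claimB : ∀ j : Fin n, j ≠ i0 → |η j - U1| ≤ ((n:ℝ) - 2) * ε * U1 := by
    intro j hj
    have hi0m : i0 ∈ Finset.univ.erase j := mem_erase.mpr ⟨Ne.symm hj, mem_univ _⟩
    have hsplit : η j = U i0 + ∑ i ∈ (Finset.univ.erase j).erase i0, U i := by
      rw [hη, ← Finset.add_sum_erase _ _ hi0m]
    have hcard2 : ((Finset.univ.erase j).erase i0).card = n - 2 := by
      rw [card_erase_of_mem hi0m, card_erase_of_mem (mem_univ _), card_univ,
        Fintype.card_fin]
      omega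
    have hb : |∑ i ∈ (Finset.univ.erase j).erase i0, U i| ≤ ((n:ℝ) - 2) * ε * U1 := by
      calc |∑ i ∈ (Finset.univ.erase j).erase i0, U i|
          ≤ ∑ i ∈ (Finset.univ.erase j).erase i0, |U i| := Finset.abs_sum_le_sum_abs _ _
        _ ≤ ∑ _i ∈ (Finset.univ.erase j).erase i0, ε * U1 :=
            Finset.sum_le_sum (fun i hi => hsmall i (mem_erase.mp hi).1)
        _ = ((n - 2 : ℕ) : ℝ) * (ε * U1) := by rw [Finset.sum_const, hcard2, nsmul_eq_mul]
        _ = ((n:ℝ) - 2) * ε * U1 := by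
            rw [Nat.cast_sub (by omega)]; push_cast; ring
    have : η j - U1 = ∑ i ∈ (Finset.univ.erase j).erase i0, U i := by
      rw [hsplit, hU1def]; ring
    rw [this]; exact hb
  have claimB' : ∀ j : Fin n, j ≠ i0 →
      (1 - ((n : ℝ) - 2) * ε) * U1 ≤ η j ∧ η j ≤ (1 + ((n : ℝ) - 2) * ε) * U1 := by
    intro j hj
    obtain ⟨h1, h2⟩ := abs_le.mp (claimB j hj)
    constructor <;> nlinarith
  refine ⟨claimA, claimB', ?_⟩
  -- third claim
  have hP : (0:ℝ) ≤ U1 ^ (k - 1) := by positivity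
  rcases eq_or_lt_of_le hk1 with hk1' | hk2
  · -- k = 1
    have hk0 : k - 1 = 0 := by omega
    rw [hk0]
    simp only [esym, Finset.powersetCard_zero, Finset.sum_singleton, Finset.prod_empty,
      pow_zero]
    norm_num
  · have hk2 : 2 ≤ k := hk2
    set c : ℝ := (1 - ((n:ℝ) - 2) * ε) * U1 with hc
    have hc0 : 0 ≤ c := by nlinarith
    have hcb : ∀ j : Fin n, j ≠ i0 → c ≤ η j := fun j hj => (claimB' j hj).1
    have hCb : ∀ j : Fin n, j ≠ i0 → |η j| ≤ 2 * U1 := by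
      intro j hj
      rw [abs_le]
      obtain ⟨h1, h2⟩ := claimB' j hj
      constructor <;> nlinarith
    have hη0 : |η i0| ≤ ((n:ℝ) - 1) * ε * U1 := claimA
    set S := (Finset.univ : Finset (Fin n)).powersetCard (k - 1) with hS
    have hesym : esym n (k-1) η =
        (∑ s ∈ S.filter (fun s => i0 ∈ s), ∏ i ∈ s, η i)
        + (∑ s ∈ S.filter (fun s => ¬ i0 ∈ s), ∏ i ∈ s, η i) :=
      (Finset.sum_filter_add_sum_filter_not S _ _).symm
    -- good bound
    have hterm : ∀ s ∈ S.filter (fun s => ¬ i0 ∈ s), c ^ (k-1) ≤ ∏ i ∈ s, η i := by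
      intro s hs
      obtain ⟨hsS, hsi0⟩ := Finset.mem_filter.mp hs
      have hscard : s.card = k - 1 := Finset.mem_powersetCard_univ.mp hsS
      calc c ^ (k-1) = ∏ _i ∈ s, c := by rw [Finset.prod_const, hscard]
        _ ≤ ∏ i ∈ s, η i :=
            Finset.prod_le_prod (fun _ _ => hc0)
              (fun i hi => hcb i (fun h => hsi0 (h ▸ hi)))
    have hgood : c ^ (k-1) ≤ ∑ s ∈ S.filter (fun s => ¬ i0 ∈ s), ∏ i ∈ s, η i := by
      obtain ⟨s0, hs0sub, hs0card⟩ := Finset.exists_subset_card_eq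
        (show k - 1 ≤ (Finset.univ.erase i0).card by rw [hcard1]; omega)
      have hs0mem : s0 ∈ S.filter (fun s => ¬ i0 ∈ s) := by
        rw [Finset.mem_filter]
        refine ⟨Finset.mem_powersetCard_univ.mpr hs0card, fun h => ?_⟩
        exact (Finset.mem_erase.mp (hs0sub h)).1 rfl
      calc c ^ (k-1) ≤ ∏ i ∈ s0, η i := hterm s0 hs0mem
        _ ≤ ∑ s ∈ S.filter (fun s => ¬ i0 ∈ s), ∏ i ∈ s, η i :=
            Finset.single_le_sum
              (fun s hs => le_trans (pow_nonneg hc0 _) (hterm s hs)) hs0mem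
    -- bad bound
    have hbadterm : ∀ s ∈ S.filter (fun s => i0 ∈ s),
        |∏ i ∈ s, η i| ≤ ((n:ℝ) - 1) * ε * U1 * (2 * U1) ^ (k - 2) := by
      intro s hs
      obtain ⟨hsS, hsi0⟩ := Finset.mem_filter.mp hs
      have hscard : s.card = k - 1 := Finset.mem_powersetCard_univ.mp hsS
      have hecard : (s.erase i0).card = k - 2 := by
        rw [Finset.card_erase_of_mem hsi0, hscard]; omega
      have hsplit2 : ∏ i ∈ s, η i = η i0 * ∏ i ∈ s.erase i0, η i :=
        (Finset.mul_prod_erase s η hsi0).symm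
      rw [hsplit2, abs_mul, Finset.abs_prod]
      have h2 : ∏ i ∈ s.erase i0, |η i| ≤ (2 * U1) ^ (k - 2) := by
        calc ∏ i ∈ s.erase i0, |η i| ≤ ∏ _i ∈ s.erase i0, (2 * U1) :=
              Finset.prod_le_prod (fun _ _ => abs_nonneg _)
                (fun i hi => hCb i (Finset.mem_erase.mp hi).1)
          _ = (2 * U1) ^ (k - 2) := by rw [Finset.prod_const, hecard]
      have hn1 : 0 ≤ ((n:ℝ) - 1) * ε * U1 :=
        mul_nonneg (mul_nonneg (by linarith) hεpos.le) hU1.le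
      exact mul_le_mul hη0 h2 (Finset.prod_nonneg (fun _ _ => abs_nonneg _)) hn1
    have hcardS : (S.filter (fun s => i0 ∈ s)).card ≤ 2 ^ n := by
      calc (S.filter (fun s => i0 ∈ s)).card ≤ S.card := Finset.card_filter_le _ _
        _ ≤ (Finset.univ : Finset (Fin n)).powerset.card := by
            apply Finset.card_le_card
            intro t ht
            rw [Finset.mem_powerset]
            exact (Finset.mem_powersetCard.mp ht).1
        _ = 2 ^ n := by rw [Finset.card_powerset, card_univ, Fintype.card_fin]
    have hbad : |∑ s ∈ S.filter (fun s => i0 ∈ s), ∏ i ∈ s, η i|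
        ≤ (4:ℝ)^n * n * ε * U1 ^ (k-1) := by
      have hM0 : (0:ℝ) ≤ ((n:ℝ) - 1) * ε * U1 * (2 * U1) ^ (k - 2) :=
        mul_nonneg (mul_nonneg (mul_nonneg (by linarith) hεpos.le) hU1.le)
          (pow_nonneg (by linarith) _)
      calc |∑ s ∈ S.filter (fun s => i0 ∈ s), ∏ i ∈ s, η i|
          ≤ ∑ s ∈ S.filter (fun s => i0 ∈ s), |∏ i ∈ s, η i| :=
            Finset.abs_sum_le_sum_abs _ _
        _ ≤ ∑ _s ∈ S.filter (fun s => i0 ∈ s),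
              ((n:ℝ) - 1) * ε * U1 * (2 * U1) ^ (k - 2) :=
            Finset.sum_le_sum hbadterm
        _ = ((S.filter (fun s => i0 ∈ s)).card : ℝ) *
              (((n:ℝ) - 1) * ε * U1 * (2 * U1) ^ (k - 2)) := by
            rw [Finset.sum_const, nsmul_eq_mul]
        _ ≤ (2:ℝ)^n * (((n:ℝ) - 1) * ε * U1 * (2 * U1) ^ (k - 2)) := by
            apply mul_le_mul_of_nonneg_right _ hM0
            calc ((S.filter (fun s => i0 ∈ s)).card : ℝ) ≤ ((2^n : ℕ) : ℝ) := by
                  exact_mod_cast hcardS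
              _ = (2:ℝ)^n := by push_cast; ring
        _ ≤ (4:ℝ)^n * n * ε * U1 ^ (k-1) := by
            have he1 : (2 * U1) ^ (k - 2) = 2^(k-2) * U1^(k-2) := mul_pow _ _ _
            have he2 : U1 * U1 ^ (k-2) = U1 ^ (k-1) := by
              rw [← pow_succ']
              congr 1
              omega
            have he3 : (2:ℝ)^(k-2) ≤ 2^n := by
              apply pow_le_pow_right₀ (by norm_num) (by omega)
            have hU1k2 : (0:ℝ) ≤ U1 ^ (k-2) := by positivity
            have hn1 : (0:ℝ) ≤ (n:ℝ) - 1 := by linarith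
            have key : (2:ℝ)^n * (((n:ℝ) - 1) * ε * U1 * (2^(k-2) * U1 ^ (k - 2)))
                ≤ (2:ℝ)^n * ((n:ℝ) * ε * U1 * (2^n * U1 ^ (k - 2))) := by
              apply mul_le_mul_of_nonneg_left _ (by positivity)
              have : ((n:ℝ) - 1) * ε * U1 ≤ (n:ℝ) * ε * U1 := by nlinarith
              apply mul_le_mul this (by nlinarith) (by positivity) (by positivity)
            calc (2:ℝ)^n * (((n:ℝ) - 1) * ε * U1 * ((2*U1) ^ (k - 2)))
                = (2:ℝ)^n * (((n:ℝ) - 1) * ε * U1 * (2^(k-2) * U1 ^ (k - 2))) := by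
                  rw [he1]
              _ ≤ (2:ℝ)^n * ((n:ℝ) * ε * U1 * (2^n * U1 ^ (k - 2))) := key
              _ = (4:ℝ)^n * n * ε * (U1 * U1 ^ (k-2)) := by
                  rw [show (4:ℝ)^n = 2^n * 2^n by rw [← mul_pow]; norm_num]
                  ring
              _ = (4:ℝ)^n * n * ε * U1 ^ (k-1) := by rw [he2]
    -- Bernoulli
    have hm : ((k - 1 : ℕ) : ℝ) ≤ (n : ℝ) := by
      exact_mod_cast Nat.cast_le.mpr (by omega : k - 1 ≤ n)
    have hBern : 1 - ((k-1 : ℕ) : ℝ) * (((n:ℝ) - 2) * ε) ≤ (1 - ((n:ℝ) - 2) * ε) ^ (k-1) := by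
      have := one_add_mul_le_pow (a := -(((n:ℝ) - 2) * ε)) (by nlinarith) (k-1)
      calc 1 - ((k-1 : ℕ) : ℝ) * (((n:ℝ) - 2) * ε)
          = 1 + ((k-1 : ℕ) : ℝ) * (-(((n:ℝ) - 2) * ε)) := by ring
        _ ≤ (1 + -(((n:ℝ) - 2) * ε)) ^ (k-1) := this
        _ = (1 - ((n:ℝ) - 2) * ε) ^ (k-1) := by ring_nf
    have hck : (1 - (n:ℝ)^2 * ε) * U1 ^ (k-1) ≤ c ^ (k-1) := by
      have hcpow : c ^ (k-1) = (1 - ((n:ℝ) - 2) * ε) ^ (k-1) * U1 ^ (k-1) := by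
        rw [hc, mul_pow]
      rw [hcpow]
      have h5 : ((k-1 : ℕ) : ℝ) * (((n:ℝ) - 2) * ε) ≤ (n:ℝ)^2 * ε := by
        have hn2e : (0:ℝ) ≤ ((n:ℝ) - 2) * ε := mul_nonneg (by linarith) hεpos.le
        calc ((k-1 : ℕ) : ℝ) * (((n:ℝ) - 2) * ε)
            ≤ (n:ℝ) * (((n:ℝ) - 2) * ε) := mul_le_mul_of_nonneg_right hm hn2e
          _ ≤ (n:ℝ) * ((n:ℝ) * ε) := by
              apply mul_le_mul_of_nonneg_left _ (by positivity)
              nlinarith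
          _ = (n:ℝ)^2 * ε := by ring
      have := mul_le_mul_of_nonneg_right hBern hP
      nlinarith [mul_le_mul_of_nonneg_right h5 hP]
    -- final
    have hB := neg_abs_le (∑ s ∈ S.filter (fun s => i0 ∈ s), ∏ i ∈ s, η i)
    rw [hesym]
    nlinarith [hbad, hgood, hck, hB]
end
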